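/- arXiv:1203.4058 — 7 statements merged into one kernel-verified Lean document; each statement's English description precedes it below -/
import Mathlib

section
/- If u : ℝ → ℝ is a C⁴ solution of u'''' + c²u'' + f(u) = 0 on ℝ with f continuous, f(0) = 0, and u(s) → 0 as s → ±∞, then u'(s), u''(s), u'''(s) all tend to 0 as s → ±∞. -/
open Filter MeasureTheory Set

private lemma abs_sub_le' (a b : ℝ) : |a - b| ≤ |a| + |b| := by
  simpa [sub_eq_add_neg] using abs_add_le a (-b)

private lemma lip_bound {g g' : ℝ → ℝ} (hg : ∀ t, HasDerivAt g (g' t) t) {C a b : ℝ}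
    (hab : a ≤ b) (hC : ∀ t ∈ Set.Icc a b, |g' t| ≤ C) :
    |g b - g a| ≤ C * (b - a) := by
  have := (convex_Icc a b).norm_image_sub_le_of_norm_hasDerivWithin_le
    (f := g) (f' := g') (fun t _ => (hg t).hasDerivWithinAt) (fun t ht => hC t ht)
    (left_mem_Icc.2 hab) (right_mem_Icc.2 hab)
  simpa [Real.norm_eq_abs, abs_of_nonneg (sub_nonneg.2 hab)] using this

private lemma mvt_step {g g' g'' : ℝ → ℝ} (hg : ∀ t, HasDerivAt g (g' t) t)
    (hg' : ∀ t, HasDerivAt g' (g'' t) t) {x h M : ℝ} (hh : 0 < h)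
    (hM : ∀ t ∈ Set.Icc x (x + h), |g'' t| ≤ M) :
    |g' x| ≤ (|g x| + |g (x + h)|) / h + h * M := by
  have hgd : Differentiable ℝ g := fun t => (hg t).differentiableAt
  have hgd' : Differentiable ℝ g' := fun t => (hg' t).differentiableAt
  obtain ⟨ξ, hξ, hsl⟩ := exists_hasDerivAt_eq_slope g g' (lt_add_of_pos_right x hh)
    hgd.continuous.continuousOn (fun t _ => hg t)
  obtain ⟨η, hη, hsl2⟩ := exists_hasDerivAt_eq_slope g' g'' hξ.1
    hgd'.continuous.continuousOn (fun t _ => hg' t)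
  have hMη : |g'' η| ≤ M := hM η ⟨hη.1.le, hη.2.le.trans (by linarith [hξ.2])⟩
  have hM0 : 0 ≤ M := (abs_nonneg _).trans hMη
  have hξx : 0 < ξ - x := sub_pos.2 hξ.1
  have h1 : g' x = g' ξ - (ξ - x) * g'' η := by
    rw [hsl2]; field_simp; ring
  have h2 : |g' ξ| ≤ (|g x| + |g (x + h)|) / h := by
    rw [hsl, add_sub_cancel_left, abs_div, abs_of_pos hh]
    gcongr
    exact (abs_sub_le' _ _).trans (by linarith [abs_nonneg (g x), abs_nonneg (g (x+h))])
  have h3 : |g' x| ≤ |g' ξ| + (ξ - x) * |g'' η| := by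
    rw [h1]
    refine (abs_sub_le' _ _).trans ?_
    rw [abs_mul, abs_of_pos hξx]
  have h4 : (ξ - x) * |g'' η| ≤ h * M := by
    have : ξ - x ≤ h := by linarith [hξ.2]
    nlinarith [abs_nonneg (g'' η)]
  linarith

private lemma bdd_of_tendsto {g : ℝ → ℝ} (hg : Continuous g)
    (ht : Tendsto g atTop (nhds 0)) (hb : Tendsto g atBot (nhds 0)) :
    ∃ M, 0 < M ∧ ∀ x, |g x| ≤ M := by
  obtain ⟨A, hA⟩ := (Metric.tendsto_atTop.mp ht 1 one_pos)
  have hb' : ∀ᶠ x in atBot, |g x| < 1 := by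
    simpa [Real.norm_eq_abs] using NormedAddCommGroup.tendsto_nhds_zero.mp hb 1 one_pos
  obtain ⟨B, hB⟩ := eventually_atBot.mp hb'
  obtain ⟨C, hC⟩ := isCompact_Icc.exists_bound_of_continuousOn (f := g) hg.continuousOn (s := Set.Icc B A)
  refine ⟨max C 1 + 1, by positivity, fun x => ?_⟩
  rcases le_total A x with hx | hx
  · have := hA x hx; rw [Real.dist_eq, sub_zero] at this
    have : |g x| ≤ 1 := this.le
    have h1 : (1:ℝ) ≤ max C 1 := le_max_right _ _
    linarith
  rcases le_total x B with hx' | hx'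
  · have : |g x| ≤ 1 := (hB x hx').le
    have h1 : (1:ℝ) ≤ max C 1 := le_max_right _ _
    linarith
  · have := hC x ⟨hx', hx⟩
    rw [Real.norm_eq_abs] at this
    have h1 : C ≤ max C 1 := le_max_left _ _
    linarith

private lemma tendsto_of_forall {g : ℝ → ℝ} (H : ∀ ε > (0:ℝ), ∃ X, ∀ x ≥ X, |g x| ≤ ε) :
    Tendsto g atTop (nhds 0) := by
  rw [Metric.tendsto_atTop]
  intro ε hε
  obtain ⟨X, hX⟩ := H (ε/2) (by linarith)
  exact ⟨X, fun n hn => by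
    rw [Real.dist_eq, sub_zero]; exact lt_of_le_of_lt (hX n hn) (by linarith)⟩

private lemma tail_bound {g : ℝ → ℝ} (hgt : Tendsto g atTop (nhds 0)) {d : ℝ} (hd : 0 < d) :
    ∃ X, ∀ y ≥ X, |g y| ≤ d := by
  obtain ⟨X, hX⟩ := Metric.tendsto_atTop.mp hgt d hd
  exact ⟨X, fun y hy => by
    have := hX y hy; rw [Real.dist_eq, sub_zero] at this; exact this.le⟩

set_option maxHeartbeats 1000000 in
private lemma key_atTop (c : ℝ) (f u : ℝ → ℝ)
    (hf : Continuous f) (hf0 : f 0 = 0)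
    (hu : ContDiff ℝ 4 u)
    (hode : ∀ s, iteratedDeriv 4 u s + c ^ 2 * iteratedDeriv 2 u s + f (u s) = 0)
    (htop : Tendsto u atTop (nhds 0)) (hbot : Tendsto u atBot (nhds 0)) :
    Tendsto (iteratedDeriv 1 u) atTop (nhds 0) ∧
    Tendsto (iteratedDeriv 2 u) atTop (nhds 0) ∧
    Tendsto (iteratedDeriv 3 u) atTop (nhds 0) := by
  -- smoothness bookkeeping
  have hcd : ∀ k m : ℕ, k + m ≤ 4 → ContDiff ℝ (m : ℕ) (iteratedDeriv k u) := by
    intro k m hkm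
    rw [iteratedDeriv_eq_iterate]
    refine ContDiff.iterate_deriv' m k (hu.of_le ?_)
    have : m + k ≤ 4 := by omega
    exact_mod_cast (by exact_mod_cast this : ((m + k : ℕ) : ℕ∞) ≤ 4)
  have hcont : ∀ k : ℕ, k ≤ 4 → Continuous (iteratedDeriv k u) := fun k hk =>
    (hcd k 0 (by omega)).continuous
  have hdiff : ∀ k : ℕ, k ≤ 3 → Differentiable ℝ (iteratedDeriv k u) := fun k hk =>
    (hcd k 1 (by omega)).differentiable (by norm_num)
  have hHD : ∀ k : ℕ, k ≤ 3 → ∀ x, HasDerivAt (iteratedDeriv k u) (iteratedDeriv (k+1) u x) x := by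
    intro k hk x
    have := (hdiff k hk x).hasDerivAt
    rwa [show iteratedDeriv (k+1) u = deriv (iteratedDeriv k u) from iteratedDeriv_succ]
  have hHD0 : ∀ x, HasDerivAt u (iteratedDeriv 1 u x) x := by
    have := hHD 0 (by omega)
    simpa [iteratedDeriv_zero] using this
  -- global bounds
  obtain ⟨M0, hM0p, hM0⟩ := bdd_of_tendsto hu.continuous htop hbot
  have hfu_top : Tendsto (fun x => f (u x)) atTop (nhds 0) := by
    have := (hf.tendsto 0).comp htop; rwa [hf0] at this
  have hfu_bot : Tendsto (fun x => f (u x)) atBot (nhds 0) := by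
    have := (hf.tendsto 0).comp hbot; rwa [hf0] at this
  obtain ⟨G, hGp, hG⟩ := bdd_of_tendsto (hf.comp hu.continuous) hfu_top hfu_bot
  -- ODE rewritten
  have hode' : ∀ s, iteratedDeriv 4 u s = -(c ^ 2 * iteratedDeriv 2 u s + f (u s)) := by
    intro s; have := hode s; linarith
  have hode'' : ∀ s, |iteratedDeriv 4 u s| ≤ c ^ 2 * |iteratedDeriv 2 u s| + G := by
    intro s
    rw [hode', abs_neg]
    refine (abs_add_le _ _).trans ?_
    gcongr
    · rw [abs_mul, abs_of_nonneg (sq_nonneg c)]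
    · exact hG s
  -- quadratic growth of the second derivative
  set w : ℝ → ℝ := fun x => iteratedDeriv 3 u x + c ^ 2 * iteratedDeriv 1 u x with hw_def
  have hw : ∀ x, HasDerivAt w (-(f (u x))) x := by
    intro x
    have h3 := hHD 3 le_rfl x
    have h1 := hHD 1 (by omega) x
    have := h3.add (h1.const_mul (c ^ 2))
    convert this using 1
    case e'_4 => rfl
    case e'_5 => rfl
    case e'_8 => rfl
    have := hode x; rw [show (3:ℕ) + 1 = 4 from rfl, show (1:ℕ) + 1 = 2 from rfl]; linarith
  set v : ℝ → ℝ := fun x => iteratedDeriv 2 u x + c ^ 2 * u x with hv_def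
  have hv : ∀ x, HasDerivAt v (w x) x := by
    intro x
    have h2 := hHD 2 (by omega) x
    have h0 := hHD0 x
    exact h2.add (h0.const_mul (c ^ 2))
  have hwb : ∀ x, |w x| ≤ |w 0| + G * |x| := by
    intro x
    rcases le_total 0 x with hx | hx
    · have := lip_bound hw hx (C := G) (fun t _ => by rw [abs_neg]; exact hG t)
      calc |w x| = |w 0 + (w x - w 0)| := by ring_nf
        _ ≤ |w 0| + |w x - w 0| := abs_add_le _ _
        _ ≤ |w 0| + G * |x| := by rw [abs_of_nonneg hx]; linarith
    · have := lip_bound hw hx (C := G) (fun t _ => by rw [abs_neg]; exact hG t)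
      calc |w x| = |w 0 - (w 0 - w x)| := by ring_nf
        _ ≤ |w 0| + |w 0 - w x| := abs_sub_le' _ _
        _ ≤ |w 0| + G * |x| := by rw [abs_of_nonpos hx]; linarith
  have hvb : ∀ x, |v x| ≤ |v 0| + (|w 0| + G * |x|) * |x| := by
    intro x
    have hwloc : ∀ t ∈ Set.Icc (-|x|) |x|, |w t| ≤ |w 0| + G * |x| := by
      intro t ht
      refine (hwb t).trans ?_
      have : |t| ≤ |x| := abs_le.2 ⟨ht.1, ht.2⟩
      nlinarith
    rcases le_total 0 x with hx | hx
    · have hmem : ∀ t ∈ Set.Icc (0:ℝ) x, |w t| ≤ |w 0| + G * |x| := fun t ht =>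
        hwloc t ⟨by linarith [abs_nonneg x, ht.1], ht.2.trans (le_abs_self x)⟩
      have := lip_bound hv hx hmem
      calc |v x| = |v 0 + (v x - v 0)| := by ring_nf
        _ ≤ |v 0| + |v x - v 0| := abs_add_le _ _
        _ ≤ |v 0| + (|w 0| + G * |x|) * |x| := by
          rw [abs_of_nonneg hx] at this ⊢
          simp only [sub_zero] at this
          linarith
    · have hmem : ∀ t ∈ Set.Icc x (0:ℝ), |w t| ≤ |w 0| + G * |x| := fun t ht =>
        hwloc t ⟨by rw [abs_of_nonpos hx]; linarith [ht.1], by linarith [abs_nonneg x, ht.2]⟩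
      have := lip_bound hv hx hmem
      calc |v x| = |v 0 - (v 0 - v x)| := by ring_nf
        _ ≤ |v 0| + |v 0 - v x| := abs_sub_le' _ _
        _ ≤ |v 0| + (|w 0| + G * |x|) * |x| := by
          rw [abs_of_nonpos hx] at this ⊢
          simp only [zero_sub] at this
          linarith
  set C₀ : ℝ := |v 0| + |w 0| + G + c ^ 2 * M0 + 1 with hC₀_def
  have hC₀p : 0 < C₀ := by positivity
  have hquad : ∀ x, |iteratedDeriv 2 u x| ≤ C₀ * (1 + x ^ 2) := by
    intro x
    have h1 : |iteratedDeriv 2 u x| ≤ |v x| + c ^ 2 * |u x| := by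
      have : iteratedDeriv 2 u x = v x - c ^ 2 * u x := by simp [hv_def]
      rw [this]
      refine (abs_sub_le' _ _).trans ?_
      rw [abs_mul, abs_of_nonneg (sq_nonneg c)]
    have h2 := hvb x
    have h3 := hM0 x
    have habs : |x| ≤ 1 + x ^ 2 := by nlinarith [sq_abs x, sq_nonneg (|x| - 1)]
    have habs2 : |x| * |x| = x ^ 2 := by rw [← sq_abs]; ring
    nlinarith [mul_le_mul_of_nonneg_left h3 (sq_nonneg c),
      mul_le_mul_of_nonneg_left habs (abs_nonneg (w 0)), habs2, sq_nonneg x,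
      mul_nonneg (abs_nonneg (v 0)) (sq_nonneg x),
      mul_nonneg (mul_nonneg (sq_nonneg c) hM0p.le) (sq_nonneg x),
      mul_nonneg hGp.le (sq_nonneg x), abs_nonneg x]
  -- main estimate for the second derivative
  have h2top : Tendsto (iteratedDeriv 2 u) atTop (nhds 0) := by
    apply tendsto_of_forall
    intro ε hε
    set h : ℝ := min (1 / (6 * (|c| + 1))) (Real.sqrt (ε / (64 * G))) with hh_def
    have hhp : 0 < h := lt_min (by positivity) (Real.sqrt_pos.2 (by positivity))
    have hcc : h ^ 2 * c ^ 2 ≤ 1 / 32 := by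
      have h1 : h ≤ 1 / (6 * (|c| + 1)) := min_le_left _ _
      have h2 : h ^ 2 ≤ (1 / (6 * (|c| + 1))) ^ 2 := by nlinarith [hhp.le]
      have h3 : (1 / (6 * (|c| + 1))) ^ 2 * c ^ 2 ≤ 1 / 32 := by
        rw [div_pow, one_pow, div_mul_eq_mul_div, div_le_div_iff₀ (by positivity) (by norm_num)]
        nlinarith [abs_nonneg c, sq_abs c]
      nlinarith [sq_nonneg c]
    have hGG : h ^ 2 * G ≤ ε / 64 := by
      have h1 : h ≤ Real.sqrt (ε / (64 * G)) := min_le_right _ _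
      have h2 : h ^ 2 ≤ ε / (64 * G) := by
        rw [← Real.sq_sqrt (by positivity : (0:ℝ) ≤ ε / (64 * G))]
        nlinarith [hhp.le, Real.sqrt_nonneg (ε / (64 * G))]
      calc h ^ 2 * G ≤ ε / (64 * G) * G := mul_le_mul_of_nonneg_right h2 hGp.le
        _ = ε / 64 := by field_simp
    set δ : ℝ := ε * h ^ 2 / 256 with hδ_def
    obtain ⟨X0, hX0⟩ := tail_bound htop (show 0 < δ by positivity)
    set X : ℝ := max X0 0 with hX_def
    have hXtail : ∀ y ≥ X, |u y| ≤ δ := fun y hy => hX0 y (le_trans (le_max_left _ _) hy)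
    have hX0' : (0:ℝ) ≤ X := le_max_right _ _
    -- the contraction step
    have step : ∀ x ≥ X, ∃ y, x ≤ y ∧ y ≤ x + 9 * h ∧
        |iteratedDeriv 2 u x| ≤ ε / 4 + 3 / 4 * |iteratedDeriv 2 u y| := by
      intro x hx
      obtain ⟨y, hy, hymax⟩ := isCompact_Icc.exists_isMaxOn
        (Set.nonempty_Icc.2 (by linarith : x ≤ x + 9 * h))
        ((hcont 2 (by norm_num)).abs.continuousOn)
      set B := |iteratedDeriv 2 u y| with hB_def
      have hBz : ∀ z ∈ Set.Icc x (x + 9 * h), |iteratedDeriv 2 u z| ≤ B := fun z hz => hymax hz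
      have hB0 : 0 ≤ B := abs_nonneg _
      have hd3 : ∀ z ∈ Set.Icc x (x + h),
          |iteratedDeriv 3 u z| ≤ B / (4 * h) + 8 * h * c ^ 2 * B + 8 * h * G := by
        intro z hz
        have hM4 : ∀ t ∈ Set.Icc z (z + 8 * h), |iteratedDeriv 4 u t| ≤ c ^ 2 * B + G := by
          intro t ht
          refine (hode'' t).trans ?_
          have htmem : t ∈ Set.Icc x (x + 9 * h) :=
            ⟨le_trans hz.1 ht.1, le_trans ht.2 (by linarith [hz.2])⟩
          have := hBz t htmem
          nlinarith [sq_nonneg c]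
        have st := mvt_step (hHD 2 (by omega)) (hHD 3 (by omega)) (x := z)
          (show (0:ℝ) < 8 * h by positivity) hM4
        have e1 : |iteratedDeriv 2 u z| ≤ B := hBz z ⟨hz.1, by linarith [hz.2]⟩
        have e2 : |iteratedDeriv 2 u (z + 8 * h)| ≤ B :=
          hBz _ ⟨by linarith [hz.1], by linarith [hz.2]⟩
        have e3 : (|iteratedDeriv 2 u z| + |iteratedDeriv 2 u (z + 8 * h)|) / (8 * h) ≤ B / (4 * h) := by
          rw [div_le_div_iff₀ (by positivity) (by positivity)]
          nlinarith
        calc |iteratedDeriv 3 u z|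
            ≤ (|iteratedDeriv 2 u z| + |iteratedDeriv 2 u (z + 8 * h)|) / (8 * h)
              + 8 * h * (c ^ 2 * B + G) := st
          _ ≤ B / (4 * h) + 8 * h * c ^ 2 * B + 8 * h * G := by nlinarith
      have hd1 : ∀ z ∈ Set.Icc x (x + h),
          |iteratedDeriv 1 u z| ≤ 16 * δ / h + h * B / 8 := by
        intro z hz
        have hM2 : ∀ t ∈ Set.Icc z (z + h / 8), |iteratedDeriv 2 u t| ≤ B := by
          intro t ht
          exact hBz t ⟨le_trans hz.1 ht.1, le_trans ht.2 (by linarith [hz.2])⟩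
        have st := mvt_step hHD0 (hHD 1 (by omega)) (x := z)
          (show (0:ℝ) < h / 8 by positivity) hM2
        have e1 : |u z| ≤ δ := hXtail z (le_trans hx hz.1)
        have e2 : |u (z + h / 8)| ≤ δ := hXtail _ (by nlinarith [le_trans hx hz.1])
        have e3 : (|u z| + |u (z + h / 8)|) / (h / 8) ≤ 16 * δ / h := by
          rw [div_le_div_iff₀ (by positivity) (by positivity)]
          nlinarith
        calc |iteratedDeriv 1 u z| ≤ (|u z| + |u (z + h / 8)|) / (h / 8) + h / 8 * B := st
          _ ≤ 16 * δ / h + h * B / 8 := by nlinarith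
      have st := mvt_step (hHD 1 (by omega)) (hHD 2 (by omega)) (x := x) hhp hd3
      have e1 := hd1 x ⟨le_refl x, by linarith⟩
      have e2 := hd1 (x + h) ⟨by linarith, le_refl _⟩
      have e3 : (|iteratedDeriv 1 u x| + |iteratedDeriv 1 u (x + h)|) / h
          ≤ 32 * δ / h ^ 2 + B / 4 := by
        rw [div_le_iff₀ hhp]
        have e4 : (32 * δ / h ^ 2 + B / 4) * h = 16 * δ / h + h * B / 8 + (16 * δ / h + h * B / 8) := by
          field_simp
          ring
        linarith
      refine ⟨y, hy.1, hy.2, ?_⟩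
      have hδε : 32 * δ / h ^ 2 = ε / 8 := by rw [hδ_def]; field_simp; ring
      have hb1 : h * (B / (4 * h)) = B / 4 := by field_simp
      have hb2 : h * (8 * h * c ^ 2 * B) ≤ B / 4 := by nlinarith
      have hb3 : h * (8 * h * G) ≤ ε / 8 := by nlinarith
      have hfin : h * (B / (4 * h) + 8 * h * c ^ 2 * B + 8 * h * G)
          ≤ B / 4 + B / 4 + ε / 8 := by
        rw [mul_add, mul_add, hb1]
        linarith
      calc |iteratedDeriv 2 u x|
          ≤ (|iteratedDeriv 1 u x| + |iteratedDeriv 1 u (x + h)|) / h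
            + h * (B / (4 * h) + 8 * h * c ^ 2 * B + 8 * h * G) := st
        _ ≤ 32 * δ / h ^ 2 + B / 4 + (B / 4 + B / 4 + ε / 8) := by linarith
        _ ≤ ε / 4 + 3 / 4 * B := by rw [hδε] at *; linarith
    -- the iteration
    have iter : ∀ n : ℕ, ∀ x ≥ X,
        |iteratedDeriv 2 u x| ≤ ε + (3/4:ℝ) ^ n * ((C₀ + 1) * (1 + (x + 9 * h * n) ^ 2)) := by
      intro n
      induction n with
      | zero =>
        intro x hx
        simp only [pow_zero, Nat.cast_zero, mul_zero, add_zero, one_mul]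
        have := hquad x
        nlinarith [sq_nonneg x, hε.le]
      | succ n ih =>
        intro x hx
        obtain ⟨y, hxy, hyb, hstep⟩ := step x hx
        have hyX : y ≥ X := le_trans hx hxy
        have ihy := ih y hyX
        have h0x : 0 ≤ x := le_trans hX0' hx
        have hmono : 1 + (y + 9 * h * (n:ℝ)) ^ 2 ≤ 1 + (x + 9 * h * ((n:ℝ) + 1)) ^ 2 := by
          have hn0 : (0:ℝ) ≤ (n:ℝ) := Nat.cast_nonneg n
          nlinarith [mul_nonneg hhp.le hn0]
        have hpn : (0:ℝ) ≤ (3/4:ℝ) ^ n := by positivity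
        have hC1 : (0:ℝ) ≤ C₀ + 1 := by positivity
        have key2 : (3/4:ℝ) ^ n * ((C₀ + 1) * (1 + (y + 9 * h * (n:ℝ)) ^ 2))
            ≤ (3/4:ℝ) ^ n * ((C₀ + 1) * (1 + (x + 9 * h * ((n:ℝ) + 1)) ^ 2)) :=
          mul_le_mul_of_nonneg_left (mul_le_mul_of_nonneg_left hmono hC1) hpn
        rw [pow_succ]
        push_cast
        nlinarith [hstep, ihy, key2]
    have limit0 : ∀ x ≥ X, |iteratedDeriv 2 u x| ≤ ε := by
      intro x hx
      have t0 : Tendsto (fun n : ℕ => (3/4:ℝ) ^ n) atTop (nhds 0) :=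
        tendsto_pow_atTop_nhds_zero_of_lt_one (by norm_num) (by norm_num)
      have t1 := tendsto_pow_const_mul_const_pow_of_lt_one 1 (by norm_num : (0:ℝ) ≤ 3/4) (by norm_num)
      have t2 := tendsto_pow_const_mul_const_pow_of_lt_one 2 (by norm_num : (0:ℝ) ≤ 3/4) (by norm_num)
      have hsum : Tendsto (fun n : ℕ => (C₀ + 1) * (1 + x ^ 2) * (3/4:ℝ) ^ n
          + ((C₀ + 1) * (18 * h * x) * ((n:ℝ) ^ 1 * (3/4:ℝ) ^ n)
          + (C₀ + 1) * (81 * h ^ 2) * ((n:ℝ) ^ 2 * (3/4:ℝ) ^ n))) atTop (nhds 0) := by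
        have := (t0.const_mul ((C₀ + 1) * (1 + x ^ 2))).add
          ((t1.const_mul ((C₀ + 1) * (18 * h * x))).add
           (t2.const_mul ((C₀ + 1) * (81 * h ^ 2))))
        simpa using this
      have hseq : Tendsto (fun n : ℕ => ε + (3/4:ℝ) ^ n
          * ((C₀ + 1) * (1 + (x + 9 * h * n) ^ 2))) atTop (nhds ε) := by
        have e : (fun n : ℕ => ε + (3/4:ℝ) ^ n * ((C₀ + 1) * (1 + (x + 9 * h * n) ^ 2)))
            = fun n : ℕ => ε + ((C₀ + 1) * (1 + x ^ 2) * (3/4:ℝ) ^ n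
              + ((C₀ + 1) * (18 * h * x) * ((n:ℝ) ^ 1 * (3/4:ℝ) ^ n)
              + (C₀ + 1) * (81 * h ^ 2) * ((n:ℝ) ^ 2 * (3/4:ℝ) ^ n))) := by
          funext n; push_cast; ring
        rw [e]
        simpa using tendsto_const_nhds.add hsum
      exact ge_of_tendsto' hseq (fun n => iter n x hx)
    exact ⟨X, limit0⟩
  -- fourth derivative tends to zero
  have h4top : Tendsto (iteratedDeriv 4 u) atTop (nhds 0) := by
    have : Tendsto (fun s => -(c ^ 2 * iteratedDeriv 2 u s + f (u s))) atTop (nhds 0) := by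
      have := ((h2top.const_mul (c ^ 2)).add hfu_top).neg
      simpa using this
    simpa only [← hode'] using this
  -- first derivative
  have h1top : Tendsto (iteratedDeriv 1 u) atTop (nhds 0) := by
    apply tendsto_of_forall
    intro ε hε
    obtain ⟨X1, hX1⟩ := tail_bound htop (show (0:ℝ) < ε / 4 by linarith)
    obtain ⟨X2, hX2⟩ := tail_bound h2top (show (0:ℝ) < ε / 2 by linarith)
    refine ⟨max X1 X2, fun x hx => ?_⟩
    have st := mvt_step hHD0 (hHD 1 (by omega)) (x := x) (h := 1) one_pos
      (M := ε / 2) (fun t ht => hX2 t (le_trans (le_max_right _ _) (le_trans hx ht.1)))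
    have e1 : |u x| ≤ ε / 4 := hX1 x (le_trans (le_max_left _ _) hx)
    have e2 : |u (x + 1)| ≤ ε / 4 :=
      hX1 _ (by linarith [le_trans (le_max_left _ _) hx])
    rw [div_one] at st
    linarith
  -- third derivative
  have h3top : Tendsto (iteratedDeriv 3 u) atTop (nhds 0) := by
    apply tendsto_of_forall
    intro ε hε
    obtain ⟨X1, hX1⟩ := tail_bound h2top (show (0:ℝ) < ε / 4 by linarith)
    obtain ⟨X2, hX2⟩ := tail_bound h4top (show (0:ℝ) < ε / 2 by linarith)
    refine ⟨max X1 X2, fun x hx => ?_⟩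
    have st := mvt_step (hHD 2 (by omega)) (hHD 3 (by omega)) (x := x) (h := 1) one_pos
      (M := ε / 2) (fun t ht => hX2 t (le_trans (le_max_right _ _) (le_trans hx ht.1)))
    have e1 : |iteratedDeriv 2 u x| ≤ ε / 4 := hX1 x (le_trans (le_max_left _ _) hx)
    have e2 : |iteratedDeriv 2 u (x + 1)| ≤ ε / 4 :=
      hX1 _ (by linarith [le_trans (le_max_left _ _) hx])
    rw [div_one] at st
    linarith
  exact ⟨h1top, h2top, h3top⟩

theorem stmt_0 (c : ℝ) (f u : ℝ → ℝ)
    (hf : Continuous f) (hf0 : f 0 = 0)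
    (hu : ContDiff ℝ 4 u)
    (hode : ∀ s, iteratedDeriv 4 u s + c ^ 2 * iteratedDeriv 2 u s + f (u s) = 0)
    (htop : Tendsto u atTop (nhds 0)) (hbot : Tendsto u atBot (nhds 0)) :
    ∀ k, 1 ≤ k → k ≤ 3 →
      Tendsto (iteratedDeriv k u) atTop (nhds 0) ∧
      Tendsto (iteratedDeriv k u) atBot (nhds 0) := by
  obtain ⟨T1, T2, T3⟩ := key_atTop c f u hf hf0 hu hode htop hbot
  -- reflected function
  set U : ℝ → ℝ := fun x => u (-x) with hU_def
  have hUc : ContDiff ℝ 4 U := hu.comp (contDiff_neg)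
  have hUd : ∀ k : ℕ, ∀ a : ℝ, iteratedDeriv k U a = (-1 : ℝ) ^ k * iteratedDeriv k u (-a) := by
    intro k a
    simpa [smul_eq_mul] using iteratedDeriv_comp_neg k u a
  have hUode : ∀ s, iteratedDeriv 4 U s + c ^ 2 * iteratedDeriv 2 U s + f (U s) = 0 := by
    intro s
    rw [hUd 4 s, hUd 2 s]
    norm_num
    simpa using hode (-s)
  have hUtop : Tendsto U atTop (nhds 0) := hbot.comp tendsto_neg_atTop_atBot
  have hUbot : Tendsto U atBot (nhds 0) := htop.comp tendsto_neg_atBot_atTop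
  obtain ⟨B1, B2, B3⟩ := key_atTop c f U hf hf0 hUc hUode hUtop hUbot
  have conv : ∀ k : ℕ, Tendsto (iteratedDeriv k U) atTop (nhds 0) →
      Tendsto (iteratedDeriv k u) atBot (nhds 0) := by
    intro k hk
    have h1 : Tendsto (fun x => iteratedDeriv k U (-x)) atBot (nhds 0) :=
      hk.comp tendsto_neg_atBot_atTop
    have h2 : Tendsto (fun x => (-1 : ℝ) ^ k * ((-1 : ℝ) ^ k * iteratedDeriv k u x)) atBot (nhds 0) := by
      have := h1.const_mul ((-1 : ℝ) ^ k)
      simp only [hUd, neg_neg] at this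
      simpa using this
    have e : (fun x => (-1 : ℝ) ^ k * ((-1 : ℝ) ^ k * iteratedDeriv k u x))
        = iteratedDeriv k u := by
      funext x
      rw [← mul_assoc, ← pow_add, ← two_mul, pow_mul]
      norm_num
    rw [e] at h2
    exact h2
  intro k hk1 hk3
  interval_cases k
  · exact ⟨T1, conv 1 B1⟩
  · exact ⟨T2, conv 2 B2⟩
  · exact ⟨T3, conv 3 B3⟩
end

section
/- Suppose f : ℝ → ℝ is locally Lipschitz with u·f(u) > 0 for all u ≠ 0, and u is a nonzero C⁴ solution of u'''' + c²u'' + f(u) = 0 with u, u', u'', u''' → 0 at +∞. Then u changes sign infinitely many times as s → +∞; i.e., for every s₀ there exist s₁, s₂ > s₀ with u(s₁) > 0 and u(s₂) < 0. -/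
open Filter MeasureTheory

open Set Topology


/-- If `v'' ≥ 0` on `[a,∞)` and `v → 0` at `+∞`, then `v ≥ 0` on `[a,∞)`. -/
lemma aux_convex_nonneg (v v' v'' : ℝ → ℝ) (a : ℝ)
    (h1 : ∀ s, a ≤ s → HasDerivAt v (v' s) s)
    (h2 : ∀ s, a ≤ s → HasDerivAt v' (v'' s) s)
    (h3 : ∀ s, a ≤ s → 0 ≤ v'' s)
    (h4 : Tendsto v atTop (nhds 0)) :
    ∀ s, a ≤ s → 0 ≤ v s := by
  have hmono : MonotoneOn v' (Ici a) := by
    apply monotoneOn_of_deriv_nonneg (convex_Ici a)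
    · exact fun s hs => (h2 s hs).continuousAt.continuousWithinAt
    · intro x hx
      rw [interior_Ici] at hx
      exact ((h2 x hx.le).differentiableAt).differentiableWithinAt
    · intro x hx
      rw [interior_Ici] at hx
      rw [(h2 x hx.le).deriv]
      exact h3 x hx.le
  have key : ∀ t, a ≤ t → v' t ≤ 0 := by
    intro t ht
    by_contra hpos
    push_neg at hpos
    have grow : ∀ s, t ≤ s → v t + v' t * (s - t) ≤ v s := by
      intro s hs
      have hm : MonotoneOn (fun s => v s - v' t * s) (Ici t) := by
        apply monotoneOn_of_deriv_nonneg (convex_Ici t)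
        · exact fun x hx => ((h1 x (ht.trans hx)).sub
            ((hasDerivAt_id' x).const_mul (v' t))).continuousAt.continuousWithinAt
        · intro x hx
          rw [interior_Ici] at hx
          exact ((h1 x (ht.trans hx.le)).sub
            ((hasDerivAt_id' x).const_mul (v' t))).differentiableAt.differentiableWithinAt
        · intro x hx
          rw [interior_Ici] at hx
          rw [show deriv (fun s => v s - v' t * s) x = _ from
            ((h1 x (ht.trans hx.le)).sub ((hasDerivAt_id' x).const_mul (v' t))).deriv]
          have := hmono (Set.mem_Ici.2 ht) (Set.mem_Ici.2 (ht.trans hx.le)) hx.le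
          simp only [mul_one]
          linarith
      have := hm (Set.self_mem_Ici) (Set.mem_Ici.2 hs) hs
      simp only at this
      nlinarith
    have e1 : ∀ᶠ s in atTop, v s < 1 := h4.eventually_lt_const one_pos
    have e2 : Tendsto (fun s => v t + v' t * (s - t)) atTop atTop := by
      apply tendsto_atTop_add_const_left
      exact (tendsto_atTop_add_const_right _ (-t) tendsto_id).const_mul_atTop hpos
    have e3 : ∀ᶠ s in atTop, 1 ≤ v t + v' t * (s - t) := e2.eventually_ge_atTop 1
    obtain ⟨s, hs1, hs2, hs3⟩ := (e1.and (e3.and (eventually_ge_atTop t))).exists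
    have := grow s hs3
    linarith
  have hanti : AntitoneOn v (Ici a) := by
    apply antitoneOn_of_deriv_nonpos (convex_Ici a)
    · exact fun s hs => (h1 s hs).continuousAt.continuousWithinAt
    · intro x hx
      rw [interior_Ici] at hx
      exact ((h1 x hx.le).differentiableAt).differentiableWithinAt
    · intro x hx
      rw [interior_Ici] at hx
      rw [(h1 x hx.le).deriv]
      exact key x hx.le
  intro t ht
  apply le_of_tendsto h4
  filter_upwards [eventually_ge_atTop t] with s hs
  exact hanti (Set.mem_Ici.2 ht) (Set.mem_Ici.2 (ht.trans hs)) hs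


lemma aux_f_zero (f : ℝ → ℝ) (hf : Continuous f)
    (hsign : ∀ v : ℝ, v ≠ 0 → v * f v > 0) : f 0 = 0 := by
  by_contra h
  rcases lt_or_gt_of_ne h with hneg | hpos
  · have he : ∀ᶠ v in 𝓝 (0:ℝ), f v < 0 := (hf.continuousAt).eventually_lt_const hneg
    obtain ⟨v, hv1, hv2⟩ :=
      (((he.filter_mono nhdsWithin_le_nhds).and
        (eventually_mem_nhdsWithin (s := Ioi (0:ℝ)))).exists)
    rw [mem_Ioi] at hv2
    have := hsign v (ne_of_gt hv2)
    nlinarith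
  · have he : ∀ᶠ v in 𝓝 (0:ℝ), 0 < f v := (hf.continuousAt).eventually_const_lt hpos
    obtain ⟨v, hv1, hv2⟩ :=
      (((he.filter_mono nhdsWithin_le_nhds).and
        (eventually_mem_nhdsWithin (s := Iio (0:ℝ)))).exists)
    rw [mem_Iio] at hv2
    have := hsign v (ne_of_lt hv2)
    nlinarith


private def Vfield (c : ℝ) (f : ℝ → ℝ) (x : ℝ × ℝ × ℝ × ℝ) : ℝ × ℝ × ℝ × ℝ :=
  (x.2.1, x.2.2.1, x.2.2.2, -(c ^ 2 * x.2.2.1) - f x.1)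

private noncomputable def traj (u : ℝ → ℝ) (t : ℝ) : ℝ × ℝ × ℝ × ℝ :=
  (u t, iteratedDeriv 1 u t, iteratedDeriv 2 u t, iteratedDeriv 3 u t)

lemma aux_zero_of_flat (c : ℝ) (f u : ℝ → ℝ)
    (hf : LocallyLipschitz f) (hf0 : f 0 = 0)
    (hu : ContDiff ℝ 4 u)
    (hode : ∀ s, iteratedDeriv 4 u s + c ^ 2 * iteratedDeriv 2 u s + f (u s) = 0)
    (t₀ : ℝ) (h0 : ∀ k, k ≤ 3 → iteratedDeriv k u t₀ = 0) :
    ∀ t, u t = 0 := by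
  obtain ⟨K, U, hU, hKU⟩ := hf 0
  obtain ⟨ε, hε, hball⟩ := Metric.mem_nhds_iff.1 hU
  -- the vector field is Lipschitz on the ball of radius ε
  have hLcoe : ((K + 1 + (c ^ 2).toNNReal : NNReal) : ℝ) = (K : ℝ) + 1 + c ^ 2 := by
    push_cast [Real.coe_toNNReal _ (sq_nonneg c)]
    ring
  have hLip : ∀ t : ℝ, LipschitzOnWith (K + 1 + (c ^ 2).toNNReal) (Vfield c f)
      (Metric.ball (0 : ℝ × ℝ × ℝ × ℝ) ε) := by
    intro t
    rw [lipschitzOnWith_iff_dist_le_mul]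
    intro x hx y hy
    have hx1 : x.1 ∈ Metric.ball (0 : ℝ) ε := by
      rw [Metric.mem_ball] at hx ⊢
      calc dist x.1 0 ≤ dist x (0 : ℝ × ℝ × ℝ × ℝ) := by
            rw [Prod.dist_eq]; exact le_max_left _ _
        _ < ε := hx
    have hy1 : y.1 ∈ Metric.ball (0 : ℝ) ε := by
      rw [Metric.mem_ball] at hy ⊢
      calc dist y.1 0 ≤ dist y (0 : ℝ × ℝ × ℝ × ℝ) := by
            rw [Prod.dist_eq]; exact le_max_left _ _
        _ < ε := hy
    have p1 : dist x.1 y.1 ≤ dist x y := by rw [Prod.dist_eq]; exact le_max_left _ _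
    have p2 : dist x.2.1 y.2.1 ≤ dist x y := by
      rw [Prod.dist_eq, Prod.dist_eq]
      exact le_trans (le_max_left _ _) (le_max_right _ _)
    have p3 : dist x.2.2.1 y.2.2.1 ≤ dist x y := by
      rw [Prod.dist_eq, Prod.dist_eq, Prod.dist_eq]
      exact le_trans (le_trans (le_max_left _ _) (le_max_right _ _)) (le_max_right _ _)
    have p4 : dist x.2.2.2 y.2.2.2 ≤ dist x y := by
      rw [Prod.dist_eq, Prod.dist_eq, Prod.dist_eq]
      exact le_trans (le_trans (le_max_right _ _) (le_max_right _ _)) (le_max_right _ _)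
    have hF : dist (f x.1) (f y.1) ≤ K * dist x.1 y.1 :=
      hKU.dist_le_mul _ (hball hx1) _ (hball hy1)
    have hd0 : (0:ℝ) ≤ dist x y := dist_nonneg
    have hK0 : (0:ℝ) ≤ K := K.coe_nonneg
    have h4 : dist (-(c ^ 2 * x.2.2.1) - f x.1) (-(c ^ 2 * y.2.2.1) - f y.1)
        ≤ c ^ 2 * dist x.2.2.1 y.2.2.1 + K * dist x.1 y.1 := by
      rw [Real.dist_eq]
      have heq : -(c ^ 2 * x.2.2.1) - f x.1 - (-(c ^ 2 * y.2.2.1) - f y.1)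
          = c ^ 2 * (y.2.2.1 - x.2.2.1) + (f y.1 - f x.1) := by ring
      rw [heq]
      calc |c ^ 2 * (y.2.2.1 - x.2.2.1) + (f y.1 - f x.1)|
          ≤ |c ^ 2 * (y.2.2.1 - x.2.2.1)| + |f y.1 - f x.1| := abs_add_le _ _
        _ = c ^ 2 * |y.2.2.1 - x.2.2.1| + |f y.1 - f x.1| := by
            rw [abs_mul, abs_of_nonneg (sq_nonneg c)]
        _ ≤ c ^ 2 * dist x.2.2.1 y.2.2.1 + K * dist x.1 y.1 := by
            rw [← Real.dist_eq, dist_comm]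
            have : |f y.1 - f x.1| = dist (f x.1) (f y.1) := by
              rw [Real.dist_eq, abs_sub_comm]
            rw [this]
            exact add_le_add le_rfl hF
    rw [hLcoe]
    show max _ (max _ (max _ _)) ≤ _
    apply max_le
    · simp only [Vfield]
      nlinarith
    apply max_le
    · simp only [Vfield]
      nlinarith
    apply max_le
    · simp only [Vfield]
      nlinarith
    · simp only [Vfield]
      nlinarith [mul_le_mul_of_nonneg_left p3 (sq_nonneg c), mul_le_mul_of_nonneg_left p1 hK0]
  -- the trajectory solves the ODE
  have hD : ∀ (k : ℕ), k < 4 → ∀ t, HasDerivAt (iteratedDeriv k u)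
      (iteratedDeriv (k + 1) u t) t := by
    intro k hk t
    have hdiff : Differentiable ℝ (iteratedDeriv k u) :=
      hu.differentiable_iteratedDeriv k (by exact_mod_cast hk)
    rw [iteratedDeriv_succ]
    exact (hdiff t).hasDerivAt
  have hFd : ∀ t, HasDerivAt (traj u) (Vfield c f (traj u t)) t := by
    intro t
    have h0' : HasDerivAt u (iteratedDeriv 1 u t) t := by
      have := hD 0 (by norm_num) t; rwa [iteratedDeriv_zero] at this
    have h4' : HasDerivAt (iteratedDeriv 3 u)
        (-(c ^ 2 * iteratedDeriv 2 u t) - f (u t)) t := by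
      have h := hD 3 (by norm_num) t
      have he : iteratedDeriv 4 u t = -(c ^ 2 * iteratedDeriv 2 u t) - f (u t) := by
        linarith [hode t]
      rwa [he] at h
    exact h0'.prodMk ((hD 1 (by norm_num) t).prodMk ((hD 2 (by norm_num) t).prodMk h4'))
  have hcont : Continuous (traj u) := by
    refine Continuous.prodMk (hu.continuous_iteratedDeriv 0 (by norm_num) |>.congr ?_)
      (Continuous.prodMk ?_ (Continuous.prodMk ?_ ?_)) <;>
    · first
      | (intro x; rw [iteratedDeriv_zero])
      | exact hu.continuous_iteratedDeriv _ (by norm_num)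
  -- the set where the trajectory vanishes is clopen
  set S : Set ℝ := {t | traj u t = 0} with hS
  have hScl : IsClosed S := isClosed_singleton.preimage hcont
  have hSop : IsOpen S := by
    rw [isOpen_iff_mem_nhds]
    intro t₁ ht₁
    have ht₁' : traj u t₁ = 0 := ht₁
    have hmem : ∀ᶠ t in 𝓝 t₁, traj u t ∈ Metric.ball (0 : ℝ × ℝ × ℝ × ℝ) ε := by
      have := hcont.continuousAt (x := t₁)
      apply this.preimage_mem_nhds
      rw [ht₁']
      exact Metric.ball_mem_nhds _ hε
    have hVf0 : Vfield c f 0 = 0 := by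
      simp [Vfield, hf0]
    have huniq : traj u =ᶠ[𝓝 t₁] (fun _ => (0 : ℝ × ℝ × ℝ × ℝ)) := by
      apply ODE_solution_unique_of_eventually (v := fun _ => Vfield c f)
        (s := fun _ => Metric.ball (0 : ℝ × ℝ × ℝ × ℝ) ε) (Filter.Eventually.of_forall hLip)
      · filter_upwards [hmem] with t ht
        exact ⟨hFd t, ht⟩
      · filter_upwards with t
        refine ⟨?_, Metric.mem_ball_self hε⟩
        rw [hVf0]
        exact hasDerivAt_const _ _
      · exact ht₁'
    filter_upwards [huniq] with t ht
    exact ht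
  have hne : t₀ ∈ S := by
    have e0 := h0 0 (by norm_num)
    have e1 := h0 1 (by norm_num)
    have e2 := h0 2 (by norm_num)
    have e3 := h0 3 (by norm_num)
    rw [iteratedDeriv_zero] at e0
    show traj u t₀ = 0
    rw [traj, Prod.ext_iff, Prod.ext_iff, Prod.ext_iff]
    exact ⟨e0, e1, e2, e3⟩
  have : S = univ := IsClopen.eq_univ ⟨hScl, hSop⟩ ⟨t₀, hne⟩
  intro t
  have ht : traj u t = 0 := by
    have : t ∈ S := this ▸ mem_univ t
    exact this
  exact congrArg Prod.fst ht

lemma aux_exists_pos (c : ℝ) (f u : ℝ → ℝ)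
    (hf : LocallyLipschitz f) (hsign : ∀ v : ℝ, v ≠ 0 → v * f v > 0)
    (hu : ContDiff ℝ 4 u) (hune : u ≠ 0)
    (hode : ∀ s, iteratedDeriv 4 u s + c ^ 2 * iteratedDeriv 2 u s + f (u s) = 0)
    (hlim : ∀ k, k ≤ 3 → Tendsto (iteratedDeriv k u) atTop (nhds 0)) :
    ∀ s₀ : ℝ, ∃ s₁ > s₀, u s₁ > 0 := by
  intro s₀
  by_contra h
  push_neg at h
  have hf0 : f 0 = 0 := aux_f_zero f hf.continuous hsign
  set a := s₀ + 1 with ha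
  have hun : ∀ s, a ≤ s → u s ≤ 0 := fun s hs => h s (by rw [ha] at hs; linarith)
  have hfn : ∀ s, a ≤ s → f (u s) ≤ 0 := by
    intro s hs
    rcases (hun s hs).lt_or_eq with hlt | heq
    · nlinarith [hsign (u s) (ne_of_lt hlt)]
    · rw [heq, hf0]
  have hD : ∀ (k : ℕ), k < 4 → ∀ t, HasDerivAt (iteratedDeriv k u)
      (iteratedDeriv (k + 1) u t) t := by
    intro k hk t
    have hdiff : Differentiable ℝ (iteratedDeriv k u) :=
      hu.differentiable_iteratedDeriv k (by exact_mod_cast hk)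
    rw [iteratedDeriv_succ]
    exact (hdiff t).hasDerivAt
  have hu' : ∀ t, HasDerivAt u (iteratedDeriv 1 u t) t := by
    intro t
    have := hD 0 (by norm_num) t
    rwa [iteratedDeriv_zero] at this
  have A1 : ∀ s, a ≤ s → 0 ≤ iteratedDeriv 2 u s + c ^ 2 * u s := by
    apply aux_convex_nonneg _ (fun s => iteratedDeriv 3 u s + c ^ 2 * iteratedDeriv 1 u s)
      (fun s => iteratedDeriv 4 u s + c ^ 2 * iteratedDeriv 2 u s) a
    · exact fun s _ => (hD 2 (by norm_num) s).add ((hu' s).const_mul (c ^ 2))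
    · exact fun s _ => (hD 3 (by norm_num) s).add ((hD 1 (by norm_num) s).const_mul (c ^ 2))
    · intro s hs
      have h1 := hode s
      have h2 := hfn s hs
      linarith
    · have := (hlim 2 (by norm_num)).add ((hlim 0 (by norm_num)).const_mul (c ^ 2))
      simpa [iteratedDeriv_zero] using this
  have A2 : ∀ s, a ≤ s → 0 ≤ u s := by
    apply aux_convex_nonneg u (iteratedDeriv 1 u) (iteratedDeriv 2 u) a
    · exact fun s _ => hu' s
    · exact fun s _ => hD 1 (by norm_num) s
    · intro s hs
      have h1 := A1 s hs
      have h2 : c ^ 2 * u s ≤ 0 := mul_nonpos_of_nonneg_of_nonpos (sq_nonneg c) (hun s hs)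
      linarith
    · simpa [iteratedDeriv_zero] using hlim 0 (by norm_num)
  have hzero : ∀ s, a ≤ s → u s = 0 := fun s hs => le_antisymm (hun s hs) (A2 s hs)
  have hiter : ∀ k : ℕ, ∀ t, a < t → iteratedDeriv k u t = 0 := by
    intro k
    induction k with
    | zero =>
      intro t ht
      rw [iteratedDeriv_zero]
      exact hzero t ht.le
    | succ k ih =>
      intro t ht
      rw [iteratedDeriv_succ]
      have heq : iteratedDeriv k u =ᶠ[𝓝 t] (fun _ => (0 : ℝ)) := by
        filter_upwards [isOpen_Ioi.mem_nhds ht] with s hs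
        exact ih s hs
      rw [heq.deriv_eq]
      simp
  have hall := aux_zero_of_flat c f u hf hf0 hu hode (a + 1)
    (fun k _ => hiter k (a + 1) (by linarith))
  exact hune (funext fun t => hall t)

theorem stmt_1 (c : ℝ) (f u : ℝ → ℝ)
    (hf : LocallyLipschitz f) (hsign : ∀ v : ℝ, v ≠ 0 → v * f v > 0)
    (hu : ContDiff ℝ 4 u) (hune : u ≠ 0)
    (hode : ∀ s, iteratedDeriv 4 u s + c ^ 2 * iteratedDeriv 2 u s + f (u s) = 0)
    (hlim : ∀ k, k ≤ 3 → Tendsto (iteratedDeriv k u) atTop (nhds 0)) :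
    ∀ s₀ : ℝ, (∃ s₁ > s₀, u s₁ > 0) ∧ (∃ s₂ > s₀, u s₂ < 0) := by
  intro s₀
  constructor
  · exact aux_exists_pos c f u hf hsign hu hune hode hlim s₀
  · -- apply the positive case to `-u` with the nonlinearity `v ↦ -f (-v)`
    have hfneg : LocallyLipschitz (fun v : ℝ => -f (-v)) := by
      intro x
      obtain ⟨K, t, ht, hK⟩ := hf (-x)
      refine ⟨K, (fun y : ℝ => -y) ⁻¹' t, ?_, ?_⟩
      · exact (continuous_neg.continuousAt (x := x)).preimage_mem_nhds (by simpa using ht)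
      · rw [lipschitzOnWith_iff_dist_le_mul]
        intro p hp q hq
        have := hK.dist_le_mul _ hp _ hq
        simpa [dist_neg_neg] using this
    have hsneg : ∀ v : ℝ, v ≠ 0 → v * (fun v : ℝ => -f (-v)) v > 0 := by
      intro v hv
      have h1 := hsign (-v) (neg_ne_zero.2 hv)
      show v * -f (-v) > 0
      rw [show v * -f (-v) = -v * f (-v) by ring]
      exact h1
    have huneg : ContDiff ℝ 4 (fun s => -u s) := hu.neg
    have hueneg : (fun s => -u s) ≠ 0 := by
      intro hh
      apply hune
      funext t
      have := congrFun hh t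
      simpa [neg_eq_zero] using this
    have hodeneg : ∀ s, iteratedDeriv 4 (fun s => -u s) s
        + c ^ 2 * iteratedDeriv 2 (fun s => -u s) s
        + (fun v : ℝ => -f (-v)) ((fun s => -u s) s) = 0 := by
      intro s
      simp only [iteratedDeriv_fun_neg, neg_neg]
      have := hode s
      linarith
    have hlimneg : ∀ k, k ≤ 3 → Tendsto (iteratedDeriv k (fun s => -u s)) atTop (nhds 0) := by
      intro k hk
      have h2 : Tendsto (fun t => -iteratedDeriv k u t) atTop (nhds (-0)) := (hlim k hk).neg
      simp only [neg_zero] at h2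
      refine h2.congr fun t => ?_
      rw [iteratedDeriv_fun_neg]
    obtain ⟨s₂, hs₂, hpos⟩ := aux_exists_pos c (fun v : ℝ => -f (-v)) (fun s => -u s)
      hfneg hsneg huneg hueneg hodeneg hlimneg s₀
    exact ⟨s₂, hs₂, by simpa using hpos⟩
end

section
/- Suppose f : ℝ → ℝ is continuous, differentiable at 0, f(0) = 0, u·f(u) > 0 for u ≠ 0, and 0 < c⁴ < 4f'(0). If u is a nonzero homoclinic solution of u'''' + c²u'' + f(u) = 0 (u and its first three derivatives vanish at ±∞), then u, u', u'' ∈ L²(ℝ), i.e., u ∈ H²(ℝ). -/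
open Filter MeasureTheory Set Topology

/-- Quadratic form lemma: if `b^2 < 4m` then there is a margin `δ`. -/
lemma stmt4_quad (b m : ℝ) (hb : 0 < b) (hm0 : 0 < m) (hm4 : b ^ 2 < 4 * m) :
    ∃ δ : ℝ, 0 < δ ∧ δ < 1 ∧ ∀ x y : ℝ, b * (x * y) ≤ (m - δ) * x ^ 2 + (1 - δ) * y ^ 2 := by
  set E : ℝ := 5 * m + 1 + b ^ 2 with hE
  have hEpos : 0 < E := by positivity
  set δ : ℝ := (4 * m - b ^ 2) / (4 * E) with hδdef
  have hδ0 : 0 < δ := by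
    apply div_pos (by linarith) (by linarith)
  have heq : δ * (4 * E) = 4 * m - b ^ 2 := by
    rw [hδdef]; exact div_mul_cancel₀ _ (mul_pos four_pos hEpos).ne'
  have hδ1 : δ < 1 := by
    nlinarith [heq, hEpos, hδ0]
  have hmδ : 0 < m - δ := by
    nlinarith [heq, hEpos, hδ0, hm0]
  have hMδ : b ^ 2 ≤ 4 * (m - δ) * (1 - δ) := by
    nlinarith [heq, mul_nonneg hδ0.le (show (0:ℝ) ≤ 4 * m + b ^ 2 + δ by positivity)]
  refine ⟨δ, hδ0, hδ1, fun x y => ?_⟩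
  nlinarith [sq_nonneg (2 * (m - δ) * x - b * y), mul_nonneg (sub_nonneg.mpr hMδ) (sq_nonneg y),
    hmδ, sq_nonneg y, sq_nonneg x]

/-- Near the origin `v * f v ≥ m v^2` for any `m` below the derivative. -/
lemma stmt4_slope (f : ℝ → ℝ) (f'0 m : ℝ) (hfd : HasDerivAt f f'0 0) (hf0 : f 0 = 0)
    (hm : m < f'0) : ∃ r > 0, ∀ v : ℝ, |v| < r → m * v ^ 2 ≤ v * f v := by
  have hs := hasDerivAt_iff_tendsto_slope.mp hfd
  have h2 : ∀ᶠ v in 𝓝[≠] (0:ℝ), m < slope f 0 v :=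
    hs.eventually (eventually_gt_nhds hm)
  rw [eventually_nhdsWithin_iff, Metric.eventually_nhds_iff] at h2
  obtain ⟨r, hr, h3⟩ := h2
  refine ⟨r, hr, fun v hv => ?_⟩
  rcases eq_or_ne v 0 with rfl | hv0
  · simp
  · have h5 := h3 (show dist v 0 < r by simpa [Real.dist_eq] using hv) hv0
    have hslope : slope f 0 v = f v / v := by simp [slope_def_field, hf0]
    rw [hslope] at h5
    have h4 : 0 ≤ v ^ 2 * (f v / v - m) := mul_nonneg (sq_nonneg v) (by linarith)
    have h6 : v ^ 2 * (f v / v - m) = v * f v - m * v ^ 2 := by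
      field_simp
    linarith [h4, h6.ge]

/-- One-sided (right) tail integrability from a Lyapunov-type bound. -/
lemma stmt4_tail_top (g K Kd : ℝ → ℝ) (hgc : Continuous g) (hKdc : Continuous Kd)
    (hgpos : ∀ s, 0 ≤ g s) (hK : ∀ s, HasDerivAt K (Kd s) s) (A : ℝ)
    (hbound : ∀ s, A ≤ s → g s ≤ -Kd s) (hKb : ∀ s, A ≤ s → |K s| < 1) :
    IntegrableOn g (Ioi A) := by
  apply integrableOn_Ioi_of_intervalIntegral_norm_bounded (l := atTop) (b := fun R : ℝ => R) 2 A
  · intro R; exact hgc.integrableOn_Ioc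
  · exact tendsto_id
  · filter_upwards [eventually_ge_atTop A] with R hR
    have hnorm : (∫ x in A..R, ‖g x‖) = ∫ x in A..R, g x := by
      congr 1; ext x; exact Real.norm_of_nonneg (hgpos x)
    rw [hnorm]
    have hmono : (∫ x in A..R, g x) ≤ ∫ x in A..R, -Kd x := by
      apply intervalIntegral.integral_mono_on hR (hgc.intervalIntegrable A R)
        (hKdc.neg.intervalIntegrable A R)
      intro x hx; exact hbound x hx.1
    have hftc : (∫ x in A..R, Kd x) = K R - K A :=
      intervalIntegral.integral_eq_sub_of_hasDerivAt (fun x _ => hK x)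
        (hKdc.intervalIntegrable A R)
    have hneg : (∫ x in A..R, -Kd x) = -(K R - K A) := by
      rw [intervalIntegral.integral_neg, hftc]
    have h1 := abs_lt.mp (hKb A le_rfl)
    have h2 := abs_lt.mp (hKb R hR)
    linarith [hmono, hneg.le, hneg.ge]

/-- One-sided (left) tail integrability from a Lyapunov-type bound. -/
lemma stmt4_tail_bot (g K Kd : ℝ → ℝ) (hgc : Continuous g) (hKdc : Continuous Kd)
    (hgpos : ∀ s, 0 ≤ g s) (hK : ∀ s, HasDerivAt K (Kd s) s) (B : ℝ)
    (hbound : ∀ s, s ≤ B → g s ≤ -Kd s) (hKb : ∀ s, s ≤ B → |K s| < 1) :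
    IntegrableOn g (Iic B) := by
  apply integrableOn_Iic_of_intervalIntegral_norm_bounded (l := atBot) (a := fun S : ℝ => S) 2 B
  · intro S; exact hgc.integrableOn_Ioc
  · exact tendsto_id
  · filter_upwards [eventually_le_atBot B] with S hS
    have hnorm : (∫ x in S..B, ‖g x‖) = ∫ x in S..B, g x := by
      congr 1; ext x; exact Real.norm_of_nonneg (hgpos x)
    rw [hnorm]
    have hmono : (∫ x in S..B, g x) ≤ ∫ x in S..B, -Kd x := by
      apply intervalIntegral.integral_mono_on hS (hgc.intervalIntegrable S B)
        (hKdc.neg.intervalIntegrable S B)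
      intro x hx; exact hbound x hx.2
    have hftc : (∫ x in S..B, Kd x) = K B - K S :=
      intervalIntegral.integral_eq_sub_of_hasDerivAt (fun x _ => hK x)
        (hKdc.intervalIntegrable S B)
    have hneg : (∫ x in S..B, -Kd x) = -(K B - K S) := by
      rw [intervalIntegral.integral_neg, hftc]
    have h1 := abs_lt.mp (hKb B le_rfl)
    have h2 := abs_lt.mp (hKb S hS)
    linarith [hmono, hneg.le, hneg.ge]

theorem stmt_4 (c : ℝ) (f u : ℝ → ℝ) (f'0 : ℝ)
    (hf : Continuous f) (hf0 : f 0 = 0)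
    (hfd : HasDerivAt f f'0 0)
    (hsign : ∀ v : ℝ, v ≠ 0 → v * f v > 0)
    (hc : 0 < c ^ 4) (hc' : c ^ 4 < 4 * f'0)
    (hu : ContDiff ℝ 4 u) (hune : u ≠ 0)
    (hode : ∀ s, iteratedDeriv 4 u s + c ^ 2 * iteratedDeriv 2 u s + f (u s) = 0)
    (hlimtop : ∀ k, k ≤ 3 → Tendsto (iteratedDeriv k u) atTop (nhds 0))
    (hlimbot : ∀ k, k ≤ 3 → Tendsto (iteratedDeriv k u) atBot (nhds 0)) :
    Integrable (fun s => (u s) ^ 2) ∧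
    Integrable (fun s => (deriv u s) ^ 2) ∧
    Integrable (fun s => (iteratedDeriv 2 u s) ^ 2) := by
  -- derivative facts
  have hd : ∀ k : ℕ, k < 4 → ∀ s, HasDerivAt (iteratedDeriv k u) (iteratedDeriv (k+1) u s) s := by
    intro k hk s
    have h := (hu.differentiable_iteratedDeriv k (by exact_mod_cast hk)).differentiableAt (x := s)
    simpa [iteratedDeriv_succ] using h.hasDerivAt
  have hd0 : ∀ s, HasDerivAt u (iteratedDeriv 1 u s) s := by
    intro s; simpa [iteratedDeriv_zero] using hd 0 (by norm_num) s
  have cu : Continuous u := hu.continuous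
  have c1 : Continuous (iteratedDeriv 1 u) := hu.continuous_iteratedDeriv 1 (by norm_num)
  have c2 : Continuous (iteratedDeriv 2 u) := hu.continuous_iteratedDeriv 2 (by norm_num)
  have c3 : Continuous (iteratedDeriv 3 u) := hu.continuous_iteratedDeriv 3 (by norm_num)
  -- constants
  have hf'0 : 0 < f'0 := by nlinarith
  have hc2 : 0 ≤ c ^ 2 := sq_nonneg c
  obtain ⟨ε, hε0, hε1, hεb⟩ : ∃ ε : ℝ, 0 < ε ∧ ε ≤ 1 ∧ (c ^ 2 + ε) ^ 2 < 4 * f'0 := by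
    refine ⟨min 1 ((4 * f'0 - c ^ 4) / (2 * (2 * c ^ 2 + 1))), ?_, min_le_left _ _, ?_⟩
    · apply lt_min one_pos
      apply div_pos (by linarith) (by positivity)
    · have h1 : min 1 ((4 * f'0 - c ^ 4) / (2 * (2 * c ^ 2 + 1))) ≤ 1 := min_le_left _ _
      have h2 : min 1 ((4 * f'0 - c ^ 4) / (2 * (2 * c ^ 2 + 1))) ≤
          (4 * f'0 - c ^ 4) / (2 * (2 * c ^ 2 + 1)) := min_le_right _ _
      have h0 : 0 < min 1 ((4 * f'0 - c ^ 4) / (2 * (2 * c ^ 2 + 1))) := by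
        apply lt_min one_pos; apply div_pos (by linarith) (by positivity)
      set e := min 1 ((4 * f'0 - c ^ 4) / (2 * (2 * c ^ 2 + 1)))
      have h3 : e * (2 * (2 * c ^ 2 + 1)) ≤ 4 * f'0 - c ^ 4 :=
        (le_div_iff₀ (by positivity)).mp h2
      have : (c ^ 2 + e) ^ 2 = c ^ 4 + 2 * c ^ 2 * e + e ^ 2 := by ring
      nlinarith [h3, h0, h1, hc2]
  set b : ℝ := c ^ 2 + ε with hbdef
  have hb0 : 0 < b := by positivity
  set m : ℝ := (b ^ 2 / 4 + f'0) / 2 with hmdef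
  have hm4 : b ^ 2 < 4 * m := by rw [hmdef]; nlinarith [hεb]
  have hmf : m < f'0 := by rw [hmdef]; nlinarith [hεb]
  have hm0 : 0 < m := by nlinarith [sq_nonneg b, hm4]
  obtain ⟨δ, hδ0, hδ1, hQ⟩ := stmt4_quad b m hb0 hm0 hm4
  obtain ⟨r, hr0, hr⟩ := stmt4_slope f f'0 m hfd hf0 hmf
  -- the Lyapunov function and its derivative
  set K : ℝ → ℝ := fun s => u s * iteratedDeriv 3 u s - iteratedDeriv 1 u s * iteratedDeriv 2 u s
      - ε * (u s * iteratedDeriv 1 u s) with hKdef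
  set Kd : ℝ → ℝ := fun s => -(u s * f (u s)) - (iteratedDeriv 2 u s) ^ 2
      - ε * (iteratedDeriv 1 u s) ^ 2 - b * (u s * iteratedDeriv 2 u s) with hKddef
  have hKder : ∀ s, HasDerivAt K (Kd s) s := by
    intro s
    have h03 := (hd0 s).mul (hd 3 (by norm_num) s)
    have h12 := (hd 1 (by norm_num) s).mul (hd 2 (by norm_num) s)
    have h01 := ((hd0 s).mul (hd 1 (by norm_num) s)).const_mul ε
    have h := (h03.sub h12).sub h01
    refine h.congr_deriv ?_
    have hodes := hode s
    norm_num only [Kd, b]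
    have h4 : iteratedDeriv 4 u s = -(c ^ 2 * iteratedDeriv 2 u s) - f (u s) := by linarith
    rw [h4]; ring
  -- the nonnegative comparison function
  set g : ℝ → ℝ := fun s => δ * (u s) ^ 2 + ε * (iteratedDeriv 1 u s) ^ 2
      + δ * (iteratedDeriv 2 u s) ^ 2 with hgdef
  have hgpos : ∀ s, 0 ≤ g s := by intro s; simp only [hgdef]; positivity
  have hgc : Continuous g :=
    ((continuous_const.mul (cu.pow 2)).add (continuous_const.mul (c1.pow 2))).add
      (continuous_const.mul (c2.pow 2))
  have hKdc : Continuous Kd :=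
    (((cu.mul (hf.comp cu)).neg.sub (c2.pow 2)).sub
      (continuous_const.mul (c1.pow 2))).sub (continuous_const.mul (cu.mul c2))
  have hKc : Continuous K :=
    ((cu.mul c3).sub (c1.mul c2)).sub (continuous_const.mul (cu.mul c1))
  -- pointwise bound where |u| < r
  have hptwise : ∀ s, |u s| < r → g s ≤ -Kd s := by
    intro s hs
    have h1 := hr (u s) hs
    have h2 := hQ (u s) (-(iteratedDeriv 2 u s))
    simp only [hgdef, hKddef]
    nlinarith [h1, h2]
  -- K tends to 0 at both ends
  have hKtop : Tendsto K atTop (𝓝 0) := by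
    have h0 := hlimtop 0 (by norm_num)
    have h1 := hlimtop 1 (by norm_num)
    have h2 := hlimtop 2 (by norm_num)
    have h3 := hlimtop 3 (by norm_num)
    rw [iteratedDeriv_zero] at h0
    have := ((h0.mul h3).sub (h1.mul h2)).sub ((h0.mul h1).const_mul ε)
    simpa [hKdef, iteratedDeriv_one] using this
  have hKbot : Tendsto K atBot (𝓝 0) := by
    have h0 := hlimbot 0 (by norm_num)
    have h1 := hlimbot 1 (by norm_num)
    have h2 := hlimbot 2 (by norm_num)
    have h3 := hlimbot 3 (by norm_num)
    rw [iteratedDeriv_zero] at h0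
    have := ((h0.mul h3).sub (h1.mul h2)).sub ((h0.mul h1).const_mul ε)
    simpa [hKdef, iteratedDeriv_one] using this
  -- tail smallness of u and K at top
  have hutop : Tendsto u atTop (𝓝 0) := by
    have h0 := hlimtop 0 (by norm_num); rwa [iteratedDeriv_zero] at h0
  have hubot : Tendsto u atBot (𝓝 0) := by
    have h0 := hlimbot 0 (by norm_num); rwa [iteratedDeriv_zero] at h0
  have e1 : ∀ᶠ s in atTop, |u s| < r := by
    have := hutop (Metric.ball_mem_nhds (0:ℝ) hr0)
    simpa [Metric.mem_ball, Real.dist_eq] using this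
  have e2 : ∀ᶠ s in atTop, |K s| < 1 := by
    have := hKtop (Metric.ball_mem_nhds (0:ℝ) one_pos)
    simpa [Metric.mem_ball, Real.dist_eq] using this
  have e3 : ∀ᶠ s in atBot, |u s| < r := by
    have := hubot (Metric.ball_mem_nhds (0:ℝ) hr0)
    simpa [Metric.mem_ball, Real.dist_eq] using this
  have e4 : ∀ᶠ s in atBot, |K s| < 1 := by
    have := hKbot (Metric.ball_mem_nhds (0:ℝ) one_pos)
    simpa [Metric.mem_ball, Real.dist_eq] using this
  obtain ⟨T1, hT1⟩ := eventually_atTop.mp e1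
  obtain ⟨T2, hT2⟩ := eventually_atTop.mp e2
  obtain ⟨S1, hS1⟩ := eventually_atBot.mp e3
  obtain ⟨S2, hS2⟩ := eventually_atBot.mp e4
  set A : ℝ := max T1 T2 with hAdef
  set B : ℝ := min S1 S2 with hBdef
  have htopInt : IntegrableOn g (Ioi A) := by
    apply stmt4_tail_top g K Kd hgc hKdc hgpos hKder A
    · intro s hs
      apply hptwise
      exact hT1 s (le_trans (le_max_left _ _) hs)
    · intro s hs
      exact hT2 s (le_trans (le_max_right _ _) hs)
  have hbotInt : IntegrableOn g (Iic B) := by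
    apply stmt4_tail_bot g K Kd hgc hKdc hgpos hKder B
    · intro s hs
      apply hptwise
      exact hS1 s (le_trans hs (min_le_left _ _))
    · intro s hs
      exact hS2 s (le_trans hs (min_le_right _ _))
  have hmidInt : IntegrableOn g (Icc B A) := hgc.integrableOn_Icc
  have hgInt : Integrable g := by
    rw [← integrableOn_univ]
    have hcover : (univ : Set ℝ) ⊆ Iic B ∪ (Icc B A ∪ Ioi A) := by
      intro x _
      rcases le_total x B with h | h
      · exact Or.inl h
      · rcases lt_or_ge A x with h' | h'
        · exact Or.inr (Or.inr h')
        · exact Or.inr (Or.inl ⟨h, h'⟩)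
    exact (hbotInt.union (hmidInt.union htopInt)).mono_set hcover
  -- conclude
  have key : ∀ (w : ℝ → ℝ) (a : ℝ), Continuous w → 0 < a →
      (∀ s, a * (w s) ^ 2 ≤ g s) → Integrable (fun s => (w s) ^ 2) := by
    intro w a hwc ha hle
    apply Integrable.mono' (hgInt.const_mul (1 / a)) ((hwc.pow 2).aestronglyMeasurable)
    filter_upwards with s
    rw [Pi.pow_apply, Real.norm_of_nonneg (sq_nonneg _)]
    calc (w s) ^ 2 = 1 / a * (a * (w s) ^ 2) := by field_simp
    _ ≤ 1 / a * g s := mul_le_mul_of_nonneg_left (hle s) (by positivity)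
  refine ⟨?_, ?_, ?_⟩
  · apply key u δ cu hδ0
    intro s; simp only [hgdef]
    have h1 : 0 ≤ ε * (iteratedDeriv 1 u s) ^ 2 := by positivity
    have h2 : 0 ≤ δ * (iteratedDeriv 2 u s) ^ 2 := by positivity
    linarith
  · have heq : (fun s => (deriv u s) ^ 2) = fun s => (iteratedDeriv 1 u s) ^ 2 := by
      ext s; rw [iteratedDeriv_one]
    rw [heq]
    apply key (iteratedDeriv 1 u) ε c1 hε0
    intro s; simp only [hgdef]
    have h1 : 0 ≤ δ * (u s) ^ 2 := by positivity
    have h2 : 0 ≤ δ * (iteratedDeriv 2 u s) ^ 2 := by positivity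
    linarith
  · apply key (iteratedDeriv 2 u) δ c2 hδ0
    intro s; simp only [hgdef]
    have h1 : 0 ≤ δ * (u s) ^ 2 := by positivity
    have h2 : 0 ≤ ε * (iteratedDeriv 1 u s) ^ 2 := by positivity
    linarith
end

section
/- Suppose f : ℝ → ℝ is continuous and u ∈ H²(ℝ) is a C⁴ solution of u'''' + c²u'' + f(u) = 0 with u, u', u'', u''' → 0 at ±∞ and u·f(u) integrable. Then ∫ u(s)f(u(s)) ds = c² ∫ u'(s)² ds − ∫ u''(s)² ds, and consequently ∫ u·f(u) ds ≤ (c⁴/4) ∫ u(s)² ds. -/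
open Filter MeasureTheory

theorem stmt_5 (c : ℝ) (f u : ℝ → ℝ)
    (hf : Continuous f)
    (hu : ContDiff ℝ 4 u)
    (hu2 : Integrable (fun s => (u s) ^ 2))
    (hu'2 : Integrable (fun s => (deriv u s) ^ 2))
    (hu''2 : Integrable (fun s => (iteratedDeriv 2 u s) ^ 2))
    (huf : Integrable (fun s => u s * f (u s)))
    (hode : ∀ s, iteratedDeriv 4 u s + c ^ 2 * iteratedDeriv 2 u s + f (u s) = 0)
    (hlimtop : ∀ k, k ≤ 3 → Tendsto (iteratedDeriv k u) atTop (nhds 0))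
    (hlimbot : ∀ k, k ≤ 3 → Tendsto (iteratedDeriv k u) atBot (nhds 0)) :
    (∫ s, u s * f (u s)) = c ^ 2 * (∫ s, (deriv u s) ^ 2) - ∫ s, (iteratedDeriv 2 u s) ^ 2 ∧
    (∫ s, u s * f (u s)) ≤ c ^ 4 / 4 * ∫ s, (u s) ^ 2 := by
  -- basic differentiability facts
  have hdiff : ∀ k : ℕ, k < 4 → Differentiable ℝ (iteratedDeriv k u) := by
    intro k hk
    exact hu.differentiable_iteratedDeriv k (by exact_mod_cast hk)
  have hcont : ∀ k : ℕ, k ≤ 4 → Continuous (iteratedDeriv k u) := by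
    intro k hk
    exact hu.continuous_iteratedDeriv k (by exact_mod_cast hk)
  have hD : ∀ k : ℕ, k < 4 → ∀ s, HasDerivAt (iteratedDeriv k u) (iteratedDeriv (k + 1) u s) s := by
    intro k hk s
    rw [iteratedDeriv_succ]
    exact ((hdiff k hk) s).hasDerivAt
  have e0 : iteratedDeriv 0 u = u := iteratedDeriv_zero
  have e1 : iteratedDeriv 1 u = deriv u := iteratedDeriv_one
  have h01 : ∀ s, HasDerivAt u (deriv u s) s := by
    intro s; have := hD 0 (by norm_num) s; rw [e0] at this
    simpa [e1] using this
  have h12 : ∀ s, HasDerivAt (deriv u) (iteratedDeriv 2 u s) s := by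
    intro s; have := hD 1 (by norm_num) s; rwa [e1] at this
  have h23 : ∀ s, HasDerivAt (iteratedDeriv 2 u) (iteratedDeriv 3 u s) s := hD 2 (by norm_num)
  have h34 : ∀ s, HasDerivAt (iteratedDeriv 3 u) (iteratedDeriv 4 u s) s := hD 3 (by norm_num)
  -- limits at infinity
  have t0top : Tendsto u atTop (nhds 0) := by
    have := hlimtop 0 (by norm_num); rwa [e0] at this
  have t0bot : Tendsto u atBot (nhds 0) := by
    have := hlimbot 0 (by norm_num); rwa [e0] at this
  have t1top : Tendsto (deriv u) atTop (nhds 0) := by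
    have := hlimtop 1 (by norm_num); rwa [e1] at this
  have t1bot : Tendsto (deriv u) atBot (nhds 0) := by
    have := hlimbot 1 (by norm_num); rwa [e1] at this
  have t2top : Tendsto (iteratedDeriv 2 u) atTop (nhds 0) := hlimtop 2 (by norm_num)
  have t2bot : Tendsto (iteratedDeriv 2 u) atBot (nhds 0) := hlimbot 2 (by norm_num)
  have t3top : Tendsto (iteratedDeriv 3 u) atTop (nhds 0) := hlimtop 3 (by norm_num)
  have t3bot : Tendsto (iteratedDeriv 3 u) atBot (nhds 0) := hlimbot 3 (by norm_num)
  -- integrability of products of L² functions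
  have hmul : ∀ g h : ℝ → ℝ, Continuous g → Continuous h →
      Integrable (fun s => g s ^ 2) → Integrable (fun s => h s ^ 2) →
      Integrable (fun s => g s * h s) := by
    intro g h hg hh hg2 hh2
    refine ((hg2.add hh2).const_mul (1 / 2 : ℝ)).mono'
      ((hg.mul hh).aestronglyMeasurable) ?_
    filter_upwards with s
    simp only [Real.norm_eq_abs, Pi.add_apply]
    nlinarith [sq_nonneg (|g s| - |h s|), abs_mul (g s) (h s), sq_abs (g s), sq_abs (h s),
      abs_nonneg (g s * h s)]
  have hcu : Continuous u := hu.continuous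
  have hcu' : Continuous (deriv u) := by have := hcont 1 (by norm_num); rwa [e1] at this
  have hcu'' : Continuous (iteratedDeriv 2 u) := hcont 2 (by norm_num)
  have huu'' : Integrable (fun s => u s * iteratedDeriv 2 u s) :=
    hmul _ _ hcu hcu'' hu2 hu''2
  have hu'm : Integrable (fun s => deriv u s * deriv u s) := by
    simpa only [pow_two] using hu'2
  -- rewrite the fourth derivative via the ODE
  have hu4 : ∀ s, iteratedDeriv 4 u s = -(c ^ 2 * iteratedDeriv 2 u s) - f (u s) := by
    intro s; linarith [hode s]
  have huu4 : Integrable (fun s => u s * iteratedDeriv 4 u s) := by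
    have : (fun s => u s * iteratedDeriv 4 u s)
        = fun s => -(c ^ 2) * (u s * iteratedDeriv 2 u s) - u s * f (u s) := by
      funext s; rw [hu4 s]; ring
    rw [this]
    exact (huu''.const_mul _).sub huf
  -- key identity 1 : ∫ (u'² + u u'') = 0
  have key1 : (∫ s, (deriv u s * deriv u s + u s * iteratedDeriv 2 u s)) = 0 := by
    have h := integral_of_hasDerivAt_of_tendsto
      (f := fun s => u s * deriv u s)
      (f' := fun s => deriv u s * deriv u s + u s * iteratedDeriv 2 u s)
      (fun s => (h01 s).mul (h12 s)) (hu'm.add huu'')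
      (by simpa using t0bot.mul t1bot) (by simpa using t0top.mul t1top)
    simpa using h
  -- key identity 2 : ∫ (u u'''' - u''²) = 0
  have hF : ∀ s, HasDerivAt
      (fun s => u s * iteratedDeriv 3 u s - deriv u s * iteratedDeriv 2 u s)
      (u s * iteratedDeriv 4 u s - iteratedDeriv 2 u s ^ 2) s := by
    intro s
    have h := ((h01 s).mul (h34 s)).sub ((h12 s).mul (h23 s))
    exact h.congr_deriv (by ring)
  have hint2 : Integrable (fun s => u s * iteratedDeriv 4 u s - iteratedDeriv 2 u s ^ 2) :=
    huu4.sub hu''2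
  have key2 : (∫ s, (u s * iteratedDeriv 4 u s - iteratedDeriv 2 u s ^ 2)) = 0 := by
    have h := integral_of_hasDerivAt_of_tendsto
      (f := fun s => u s * iteratedDeriv 3 u s - deriv u s * iteratedDeriv 2 u s)
      (f' := fun s => u s * iteratedDeriv 4 u s - iteratedDeriv 2 u s ^ 2)
      hF hint2
      (by simpa using (t0bot.mul t3bot).sub (t1bot.mul t2bot))
      (by simpa using (t0top.mul t3top).sub (t1top.mul t2top))
    simpa using h
  -- derive the two integral identities
  have I1 : (∫ s, u s * iteratedDeriv 2 u s) = -∫ s, (deriv u s) ^ 2 := by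
    rw [integral_add hu'm huu''] at key1
    have : (∫ s, deriv u s * deriv u s) = ∫ s, (deriv u s) ^ 2 := by
      congr 1; funext s; ring
    linarith [key1, this]
  have I2 : (∫ s, u s * iteratedDeriv 4 u s) = ∫ s, (iteratedDeriv 2 u s) ^ 2 := by
    rw [integral_sub huu4 hu''2] at key2
    linarith [key2]
  -- the main identity
  have hufeq : (fun s => u s * f (u s))
      = fun s => -(u s * iteratedDeriv 4 u s) - c ^ 2 * (u s * iteratedDeriv 2 u s) := by
    funext s
    have h := hode s
    linear_combination u s * h
  have main : (∫ s, u s * f (u s))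
      = c ^ 2 * (∫ s, (deriv u s) ^ 2) - ∫ s, (iteratedDeriv 2 u s) ^ 2 := by
    have hA : Integrable (fun s => -(u s * iteratedDeriv 4 u s)) := huu4.neg
    have A := integral_sub hA (huu''.const_mul (c ^ 2))
    rw [hufeq, A, integral_neg, integral_const_mul, I1, I2]
    ring
  refine ⟨main, ?_⟩
  -- the inequality: c² ∫ u'² ≤ c⁴/4 ∫ u² + ∫ u''²
  have hptwise : ∀ s, -(c ^ 2) * (u s * iteratedDeriv 2 u s)
      ≤ c ^ 4 / 4 * u s ^ 2 + iteratedDeriv 2 u s ^ 2 := by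
    intro s
    nlinarith [sq_nonneg (c ^ 2 / 2 * u s + iteratedDeriv 2 u s)]
  have hineq : (∫ s, -(c ^ 2) * (u s * iteratedDeriv 2 u s))
      ≤ ∫ s, (c ^ 4 / 4 * u s ^ 2 + iteratedDeriv 2 u s ^ 2) := by
    refine integral_mono (huu''.const_mul _) ((hu2.const_mul _).add hu''2) ?_
    intro s
    exact hptwise s
  rw [integral_const_mul, I1] at hineq
  rw [integral_add (hu2.const_mul _) hu''2, integral_const_mul] at hineq
  rw [main]
  linarith [hineq]
end

section
/- Assume f : ℝ → ℝ is locally Lipschitz with u·f(u) > 0 for u ≠ 0, f is differentiable at 0 with f'(0) > 0, and 0 < c⁴ < 4f'(0). Let δ > 0 satisfy: f(u)/u > c⁴/4 whenever 0 < |u| < δ. If u is a nonzero homoclinic solution of u'''' + c²u'' + f(u) = 0, then sup_s |u(s)| ≥ δ. -/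
open Filter MeasureTheory

set_option maxHeartbeats 1000000

open Set in
private lemma eqOn_iterDW {N : ℕ} {f : ℝ → ℝ} (hf : ContDiff ℝ (N:ℕ) f)
    {s : Set ℝ} (hs : UniqueDiffOn ℝ s) :
    ∀ n : ℕ, n ≤ N → Set.EqOn (iteratedDerivWithin n f s) (iteratedDeriv n f) s := by
  intro n
  induction n with
  | zero => intro _ x hx; simp
  | succ n ih =>
    intro hn x hx
    have hn' : n ≤ N := Nat.le_of_succ_le hn
    rw [iteratedDerivWithin_succ, iteratedDeriv_succ]
    rw [derivWithin_congr (ih hn') (ih hn' hx)]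
    exact ((hf.differentiable_iteratedDeriv n (by exact_mod_cast hn)) x).derivWithin (hs x hx)

open Set in
private lemma taylor4 {g : ℝ → ℝ} (hg : ContDiff ℝ 4 g) {x₀ x : ℝ} (hx : x₀ < x) :
    ∃ ξ ∈ Set.Ioo x₀ x, g x = g x₀ + (x - x₀) * iteratedDeriv 1 g x₀
      + (x - x₀)^2 / 2 * iteratedDeriv 2 g x₀ + (x - x₀)^3 / 6 * iteratedDeriv 3 g x₀
      + (x - x₀)^4 / 24 * iteratedDeriv 4 g ξ := by
  have hud : UniqueDiffOn ℝ (Icc x₀ x) := uniqueDiffOn_Icc hx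
  have hEq := eqOn_iterDW (N := 4) hg hud
  have hd : DifferentiableOn ℝ (iteratedDerivWithin 3 g (Icc x₀ x)) (Ioo x₀ x) := by
    apply DifferentiableOn.congr
      ((hg.differentiable_iteratedDeriv 3 (by norm_num)).differentiableOn (s := Ioo x₀ x))
    exact fun y hy => hEq 3 (by norm_num) (Ioo_subset_Icc_self hy)
  obtain ⟨ξ, hξ, h⟩ := taylor_mean_remainder_lagrange (n := 3) hx.ne
    (by rw [Set.uIcc_of_le hx.le]; exact (hg.of_le (by norm_num)).contDiffOn)
    (by rw [Set.uIcc_of_le hx.le, Set.uIoo_of_le hx.le]; exact hd)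
  rw [Set.uIcc_of_le hx.le] at h
  rw [Set.uIoo_of_le hx.le] at hξ
  refine ⟨ξ, hξ, ?_⟩
  rw [taylor_within_apply] at h
  have e0 : x₀ ∈ Icc x₀ x := left_mem_Icc.2 hx.le
  have eξ : ξ ∈ Icc x₀ x := Ioo_subset_Icc_self hξ
  simp only [Finset.sum_range_succ, Finset.sum_range_zero,
    hEq 0 (by norm_num) e0, hEq 1 (by norm_num) e0, hEq 2 (by norm_num) e0,
    hEq 3 (by norm_num) e0, hEq 4 (by norm_num) eξ, smul_eq_mul] at h
  norm_num [Nat.factorial] at h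
  rw [iteratedDeriv_one]
  linear_combination h

open Set in
private lemma taylor2 {g : ℝ → ℝ} (hg : ContDiff ℝ 2 g) {x₀ x : ℝ} (hx : x₀ < x) :
    ∃ ξ ∈ Set.Ioo x₀ x, g x = g x₀ + (x - x₀) * deriv g x₀
      + (x - x₀)^2 / 2 * iteratedDeriv 2 g ξ := by
  have hud : UniqueDiffOn ℝ (Icc x₀ x) := uniqueDiffOn_Icc hx
  have hEq := eqOn_iterDW (N := 2) hg hud
  have hd : DifferentiableOn ℝ (iteratedDerivWithin 1 g (Icc x₀ x)) (Ioo x₀ x) := by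
    apply DifferentiableOn.congr
      ((hg.differentiable_iteratedDeriv 1 (by norm_num)).differentiableOn (s := Ioo x₀ x))
    exact fun y hy => hEq 1 (by norm_num) (Ioo_subset_Icc_self hy)
  obtain ⟨ξ, hξ, h⟩ := taylor_mean_remainder_lagrange (n := 1) hx.ne
    (by rw [Set.uIcc_of_le hx.le]; exact (hg.of_le (by norm_num)).contDiffOn)
    (by rw [Set.uIcc_of_le hx.le, Set.uIoo_of_le hx.le]; exact hd)
  rw [Set.uIcc_of_le hx.le] at h
  rw [Set.uIoo_of_le hx.le] at hξ
  refine ⟨ξ, hξ, ?_⟩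
  rw [taylor_within_apply] at h
  have e0 : x₀ ∈ Icc x₀ x := left_mem_Icc.2 hx.le
  have eξ : ξ ∈ Icc x₀ x := Ioo_subset_Icc_self hξ
  simp only [Finset.sum_range_succ, Finset.sum_range_zero,
    hEq 0 (by norm_num) e0, hEq 1 (by norm_num) e0, hEq 2 (by norm_num) eξ,
    smul_eq_mul] at h
  norm_num [Nat.factorial, iteratedDeriv_one] at h
  linear_combination h

open Set in
private lemma bound2 {g : ℝ → ℝ} (hg : ContDiff ℝ 4 g) {σ t Mg D : ℝ} (ht : 0 < t)
    (hMg : ∀ x ∈ Set.Icc σ (σ + 3*t), |g x| ≤ Mg)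
    (hD : ∀ x ∈ Set.Icc σ (σ + 3*t), |iteratedDeriv 4 g x| ≤ D) :
    |iteratedDeriv 2 g σ| ≤ 12 * Mg / t^2 + 25/4 * t^2 * D := by
  obtain ⟨ξ₁, hξ₁, e1⟩ := taylor4 hg (show σ < σ + 1*t by linarith)
  obtain ⟨ξ₂, hξ₂, e2⟩ := taylor4 hg (show σ < σ + 2*t by linarith)
  obtain ⟨ξ₃, hξ₃, e3⟩ := taylor4 hg (show σ < σ + 3*t by linarith)
  have m1 : ξ₁ ∈ Icc σ (σ + 3*t) := ⟨hξ₁.1.le, by linarith [hξ₁.2]⟩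
  have m2 : ξ₂ ∈ Icc σ (σ + 3*t) := ⟨hξ₂.1.le, by linarith [hξ₂.2]⟩
  have m3 : ξ₃ ∈ Icc σ (σ + 3*t) := ⟨hξ₃.1.le, by linarith [hξ₃.2]⟩
  have b0 := abs_le.1 (hMg σ ⟨le_refl _, by linarith⟩)
  have b1 := abs_le.1 (hMg _ ⟨by linarith, by linarith⟩ : |g (σ + 1*t)| ≤ Mg)
  have b2 := abs_le.1 (hMg _ ⟨by linarith, by linarith⟩ : |g (σ + 2*t)| ≤ Mg)
  have b3 := abs_le.1 (hMg _ ⟨by linarith, by linarith⟩ : |g (σ + 3*t)| ≤ Mg)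
  have q1 := abs_le.1 (hD ξ₁ m1)
  have q2 := abs_le.1 (hD ξ₂ m2)
  have q3 := abs_le.1 (hD ξ₃ m3)
  have ht4 : (0:ℝ) ≤ t^4 := by positivity
  have r1a : t^4 * iteratedDeriv 4 g ξ₁ ≤ t^4 * D := mul_le_mul_of_nonneg_left q1.2 ht4
  have r1b : -(t^4 * D) ≤ t^4 * iteratedDeriv 4 g ξ₁ := by nlinarith [q1.1]
  have r2a : t^4 * iteratedDeriv 4 g ξ₂ ≤ t^4 * D := mul_le_mul_of_nonneg_left q2.2 ht4
  have r2b : -(t^4 * D) ≤ t^4 * iteratedDeriv 4 g ξ₂ := by nlinarith [q2.1]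
  have r3a : t^4 * iteratedDeriv 4 g ξ₃ ≤ t^4 * D := mul_le_mul_of_nonneg_left q3.2 ht4
  have r3b : -(t^4 * D) ≤ t^4 * iteratedDeriv 4 g ξ₃ := by nlinarith [q3.1]
  have key : t^2 * iteratedDeriv 2 g σ
      = 2 * g σ - 5 * g (σ + 1*t) + 4 * g (σ + 2*t) - g (σ + 3*t)
        + (5/24) * (t^4 * iteratedDeriv 4 g ξ₁) - (64/24) * (t^4 * iteratedDeriv 4 g ξ₂)
        + (81/24) * (t^4 * iteratedDeriv 4 g ξ₃) := by
    linear_combination (5 : ℝ) * e1 - 4 * e2 + e3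
  have habs : |t^2 * iteratedDeriv 2 g σ| ≤ 12 * Mg + 25/4 * t^4 * D := by
    rw [abs_le]
    constructor <;>
      linarith only [key, r1a, r1b, r2a, r2b, r3a, r3b, b0.1, b0.2, b1.1, b1.2,
        b2.1, b2.2, b3.1, b3.2]
  rw [abs_mul, abs_of_nonneg (by positivity : (0:ℝ) ≤ t^2)] at habs
  have ht2 : (0:ℝ) < t^2 := by positivity
  rw [show 12 * Mg / t^2 + 25/4 * t^2 * D = (12 * Mg + 25/4 * t^4 * D)/t^2 by
    field_simp]
  rw [le_div_iff₀ ht2]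
  linarith [habs]

open Set in
private lemma bound1 {g : ℝ → ℝ} (hg : ContDiff ℝ 2 g) {σ t Mg D : ℝ} (ht : 0 < t)
    (hMg : ∀ x ∈ Set.Icc σ (σ + t), |g x| ≤ Mg)
    (hD : ∀ x ∈ Set.Icc σ (σ + t), |iteratedDeriv 2 g x| ≤ D) :
    |deriv g σ| ≤ 2 * Mg / t + t * D / 2 := by
  obtain ⟨ξ, hξ, e⟩ := taylor2 hg (show σ < σ + t by linarith)
  have m : ξ ∈ Icc σ (σ + t) := ⟨hξ.1.le, hξ.2.le⟩
  have b0 := abs_le.1 (hMg σ ⟨le_refl _, by linarith⟩)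
  have b1 := abs_le.1 (hMg _ ⟨by linarith, le_refl _⟩ : |g (σ + t)| ≤ Mg)
  have q := abs_le.1 (hD ξ m)
  have ht2 : (0:ℝ) ≤ t^2 := by positivity
  have r1 : t^2 * iteratedDeriv 2 g ξ ≤ t^2 * D := mul_le_mul_of_nonneg_left q.2 ht2
  have r2 : -(t^2 * D) ≤ t^2 * iteratedDeriv 2 g ξ := by nlinarith [q.1]
  have key : t * deriv g σ = g (σ + t) - g σ - (1/2) * (t^2 * iteratedDeriv 2 g ξ) := by
    linear_combination -e
  have habs : |t * deriv g σ| ≤ 2 * Mg + t^2 * D / 2 := by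
    rw [abs_le]
    constructor <;> linarith only [key, r1, r2, b0.1, b0.2, b1.1, b1.2]
  rw [abs_mul, abs_of_nonneg ht.le] at habs
  rw [show 2 * Mg / t + t * D / 2 = (2 * Mg + t^2 * D / 2)/t by field_simp]
  rw [le_div_iff₀ ht]
  linarith [habs]

private lemma refl2 (g : ℝ → ℝ) (x : ℝ) :
    iteratedDeriv 2 (fun y => g (-y)) x = iteratedDeriv 2 g (-x) := by
  rw [iteratedDeriv_comp_neg]; norm_num

private lemma refl4 (g : ℝ → ℝ) (x : ℝ) :
    iteratedDeriv 4 (fun y => g (-y)) x = iteratedDeriv 4 g (-x) := by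
  rw [iteratedDeriv_comp_neg]; norm_num

open Set in
private lemma bdd2 {g : ℝ → ℝ} (hg : ContDiff ℝ 4 g) {Mg K c : ℝ}
    (hMg : ∀ x, |g x| ≤ Mg)
    (hK : ∀ x, |iteratedDeriv 4 g x| ≤ c^2 * |iteratedDeriv 2 g x| + K) :
    ∃ B, ∀ x, |iteratedDeriv 2 g x| ≤ B := by
  set t : ℝ := min (3⁻¹ : ℝ) ((5*(|c|+1))⁻¹) with htdef
  have ht : 0 < t := lt_min (by norm_num) (by positivity)
  have h3t : 3*t ≤ 1 := by
    have : t ≤ 3⁻¹ := min_le_left _ _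
    linarith
  have htc : 25/4 * t^2 * c^2 ≤ 1/4 := by
    have h1 : t ≤ (5*(|c|+1))⁻¹ := min_le_right _ _
    have h2 : t * (5*(|c|+1)) ≤ 1 := by
      rw [← le_div_iff₀ (by positivity : (0:ℝ) < 5*(|c|+1))]
      simpa [one_div] using h1
    have h3 : c^2 ≤ (|c|+1)^2 := by
      nlinarith [abs_nonneg c, sq_abs c, neg_abs_le c, le_abs_self c]
    nlinarith [abs_nonneg c, ht.le, mul_nonneg ht.le (by positivity : (0:ℝ) ≤ 5*(|c|+1))]
  refine ⟨2 * (12 * Mg / t^2 + 25/4 * t^2 * K), fun s₀ => ?_⟩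
  have hMg0 : 0 ≤ Mg := le_trans (abs_nonneg _) (hMg 0)
  have hcont : ContinuousOn (fun x => |iteratedDeriv 2 g x|) (Icc (s₀-1) (s₀+1)) :=
    ((hg.continuous_iteratedDeriv 2 (by norm_num)).abs).continuousOn
  obtain ⟨σ, hσI, hσmax⟩ := isCompact_Icc.exists_isMaxOn
    (nonempty_Icc.2 (by linarith)) hcont
  have hA : ∀ x ∈ Icc (s₀-1) (s₀+1), |iteratedDeriv 2 g x| ≤ |iteratedDeriv 2 g σ| :=
    fun x hx => hσmax hx
  set A := |iteratedDeriv 2 g σ| with hAdef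
  have hA0 : 0 ≤ A := abs_nonneg _
  have hs₀ : |iteratedDeriv 2 g s₀| ≤ A := hA s₀ ⟨by linarith, by linarith⟩
  have main : A ≤ 12 * Mg / t^2 + 25/4 * t^2 * (c^2 * A + K) := by
    by_cases hside : σ ≤ s₀
    · refine bound2 hg ht (fun x _ => hMg x) (fun x hx => ?_)
      have hxI : x ∈ Icc (s₀-1) (s₀+1) :=
        ⟨by linarith [hσI.1, hx.1], by linarith [hx.2, h3t]⟩
      calc |iteratedDeriv 4 g x| ≤ c^2 * |iteratedDeriv 2 g x| + K := hK x
        _ ≤ c^2 * A + K := by nlinarith [hA x hxI, sq_nonneg c]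
    · push_neg at hside
      have hb := bound2 (g := fun y => g (-y)) (σ := -σ) (hg.comp contDiff_neg) ht
        (fun x _ => hMg (-x))
        (fun x hx => by
          rw [refl4]
          have hxI : -x ∈ Icc (s₀-1) (s₀+1) :=
            ⟨by linarith [hx.2, h3t], by linarith [hx.1, hσI.2]⟩
          calc |iteratedDeriv 4 g (-x)| ≤ c^2 * |iteratedDeriv 2 g (-x)| + K := hK (-x)
            _ ≤ c^2 * A + K := by nlinarith [hA (-x) hxI, sq_nonneg c])
      rw [refl2, neg_neg] at hb
      exact hb
  nlinarith [main, htc, hA0, hs₀]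

open Set in
private lemma lim2 {g : ℝ → ℝ} (hg : ContDiff ℝ 4 g) {D : ℝ}
    (hD : ∀ x, |iteratedDeriv 4 g x| ≤ D)
    (h0 : Tendsto g atTop (nhds 0)) :
    Tendsto (iteratedDeriv 2 g) atTop (nhds 0) := by
  have hD0 : 0 ≤ D := le_trans (abs_nonneg _) (hD 0)
  rw [Metric.tendsto_atTop]
  intro ε hε
  set t : ℝ := Real.sqrt (ε / (13 * (D + 1))) with htdef
  have harg : 0 < ε / (13 * (D + 1)) := by positivity
  have ht : 0 < t := Real.sqrt_pos.2 harg
  have ht2 : t^2 = ε / (13 * (D + 1)) := Real.sq_sqrt harg.le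
  have hrem : 25/4 * t^2 * D < ε / 2 := by
    have h13 : (0:ℝ) < 13*(D+1) := by positivity
    have hq : ε/(13*(D+1)) * (13*(D+1)) = ε := div_mul_cancel₀ _ (ne_of_gt h13)
    rw [ht2]
    nlinarith [hq, harg, hD0, mul_nonneg harg.le hD0]
  have hm : 0 < ε/2 * t^2 / 12 := by positivity
  obtain ⟨N, hN⟩ := (Metric.tendsto_atTop.1 h0) _ hm
  refine ⟨N, fun σ hσ => ?_⟩
  have hb := bound2 hg ht (Mg := ε/2 * t^2 / 12) (fun x hx => by
      have := hN x (le_trans hσ hx.1)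
      rw [Real.dist_eq, sub_zero] at this
      exact this.le)
    (fun x _ => hD x)
  rw [Real.dist_eq, sub_zero]
  have heq : 12 * (ε/2 * t^2 / 12) / t^2 = ε/2 := by field_simp
  calc |iteratedDeriv 2 g σ| ≤ 12 * (ε/2 * t^2 / 12) / t^2 + 25/4 * t^2 * D := hb
    _ < ε := by rw [heq]; linarith

open Set in
private lemma lim1 {g : ℝ → ℝ} (hg : ContDiff ℝ 2 g)
    (h0 : Tendsto g atTop (nhds 0))
    (h2 : Tendsto (iteratedDeriv 2 g) atTop (nhds 0)) :
    Tendsto (deriv g) atTop (nhds 0) := by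
  rw [Metric.tendsto_atTop]
  intro ε hε
  obtain ⟨N₁, hN₁⟩ := (Metric.tendsto_atTop.1 h0) (ε/8) (by linarith)
  obtain ⟨N₂, hN₂⟩ := (Metric.tendsto_atTop.1 h2) (ε/2) (by linarith)
  refine ⟨max N₁ N₂, fun σ hσ => ?_⟩
  have hb := bound1 hg (t := 1) (Mg := ε/8) (D := ε/2) one_pos
    (fun x hx => by
      have := hN₁ x (le_trans (le_trans (le_max_left _ _) hσ) hx.1)
      rw [Real.dist_eq, sub_zero] at this; exact this.le)
    (fun x hx => by
      have := hN₂ x (le_trans (le_trans (le_max_right _ _) hσ) hx.1)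
      rw [Real.dist_eq, sub_zero] at this; exact this.le)
  rw [Real.dist_eq, sub_zero]
  calc |deriv g σ| ≤ 2 * (ε/8) / 1 + 1 * (ε/2) / 2 := hb
    _ < ε := by linarith

private lemma iterAdd (m : ℕ) (n : ℕ) (f : ℝ → ℝ) :
    iteratedDeriv m (iteratedDeriv n f) = iteratedDeriv (m + n) f := by
  induction m with
  | zero => simp
  | succ m ih =>
    rw [iteratedDeriv_succ, ih, show m + 1 + n = (m + n) + 1 from by omega,
      iteratedDeriv_succ]

theorem stmt_6 (c : ℝ) (f u : ℝ → ℝ) (f'0 δ : ℝ)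
    (hf : LocallyLipschitz f)
    (hsign : ∀ v : ℝ, v ≠ 0 → v * f v > 0)
    (hfd : HasDerivAt f f'0 0) (hf'0 : 0 < f'0)
    (hc : 0 < c ^ 4) (hc' : c ^ 4 < 4 * f'0)
    (hδ : 0 < δ)
    (hδ' : ∀ v : ℝ, v ≠ 0 → |v| < δ → f v / v > c ^ 4 / 4)
    (hu : ContDiff ℝ 4 u) (hune : u ≠ 0)
    (hode : ∀ s, iteratedDeriv 4 u s + c ^ 2 * iteratedDeriv 2 u s + f (u s) = 0)
    (htop : Tendsto u atTop (nhds 0)) (hbot : Tendsto u atBot (nhds 0)) :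
    ∀ M : ℝ, (∀ s, |u s| ≤ M) → δ ≤ M := by
  intro M hbound
  by_contra hMδ
  push_neg at hMδ
  have hM0 : 0 ≤ M := le_trans (abs_nonneg _) (hbound 0)
  have fc : ContinuousAt f 0 := hfd.continuousAt
  -- f 0 = 0
  have f0 : f 0 = 0 := by
    have hneg : f 0 ≤ 0 := by
      have htd : Tendsto f (nhdsWithin 0 (Set.Iio 0)) (nhds (f 0)) :=
        fc.tendsto.mono_left nhdsWithin_le_nhds
      refine le_of_tendsto htd ?_
      filter_upwards [self_mem_nhdsWithin] with x hx
      by_contra hfx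
      push_neg at hfx
      nlinarith [hsign x (ne_of_lt hx), mul_pos (neg_pos.2 (Set.mem_Iio.1 hx)) hfx]
    have hpos : 0 ≤ f 0 := by
      have htd : Tendsto f (nhdsWithin 0 (Set.Ioi 0)) (nhds (f 0)) :=
        fc.tendsto.mono_left nhdsWithin_le_nhds
      refine ge_of_tendsto htd ?_
      filter_upwards [self_mem_nhdsWithin] with x hx
      by_contra hfx
      push_neg at hfx
      nlinarith [hsign x (ne_of_gt (Set.mem_Ioi.1 hx)), mul_pos (Set.mem_Ioi.1 hx) (neg_pos.2 hfx)]
    linarith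
  -- bound for f ∘ u
  obtain ⟨K, hK⟩ := (isCompact_Icc (a := -M) (b := M)).exists_bound_of_continuousOn
    (hf.continuous.continuousOn (s := Set.Icc (-M) M))
  have hKu : ∀ s, |f (u s)| ≤ K := by
    intro s
    have hmem : u s ∈ Set.Icc (-M) M := by
      have := abs_le.1 (hbound s); exact ⟨this.1, this.2⟩
    simpa [Real.norm_eq_abs] using hK _ hmem
  have hK0 : 0 ≤ K := le_trans (abs_nonneg _) (hKu 0)
  have hode4 : ∀ s, iteratedDeriv 4 u s = -(c^2 * iteratedDeriv 2 u s) - f (u s) :=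
    fun s => by linarith [hode s]
  have h4b : ∀ s, |iteratedDeriv 4 u s| ≤ c^2 * |iteratedDeriv 2 u s| + K := by
    intro s
    rw [hode4 s, show -(c^2 * iteratedDeriv 2 u s) - f (u s)
      = -((c^2 * iteratedDeriv 2 u s) + f (u s)) by ring, abs_neg]
    calc |(c^2 * iteratedDeriv 2 u s) + f (u s)|
        ≤ |c^2 * iteratedDeriv 2 u s| + |f (u s)| := abs_add_le _ _
      _ ≤ c^2 * |iteratedDeriv 2 u s| + K := by
          rw [abs_mul, abs_of_nonneg (sq_nonneg c)]
          exact add_le_add le_rfl (hKu s)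
  obtain ⟨B, hB⟩ := bdd2 hu hbound h4b
  have h4B : ∀ s, |iteratedDeriv 4 u s| ≤ c^2 * B + K :=
    fun s => le_trans (h4b s) (by nlinarith [hB s, sq_nonneg c])
  -- limits of f ∘ u
  have hfu_t : Tendsto (fun s => f (u s)) atTop (nhds 0) := by
    have h := fc.tendsto.comp htop
    rw [f0] at h
    exact h
  have hfu_b : Tendsto (fun s => f (u s)) atBot (nhds 0) := by
    have h := fc.tendsto.comp hbot
    rw [f0] at h
    exact h
  -- limits at +∞
  have l2t : Tendsto (iteratedDeriv 2 u) atTop (nhds 0) := lim2 hu h4B htop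
  have l4t : Tendsto (iteratedDeriv 4 u) atTop (nhds 0) := by
    have h := ((l2t.const_mul (c^2)).neg).sub hfu_t
    have e : iteratedDeriv 4 u = fun s => -(c^2 * iteratedDeriv 2 u s) - f (u s) :=
      funext hode4
    rw [e]
    simpa using h
  have l1t : Tendsto (deriv u) atTop (nhds 0) := lim1 (hu.of_le (by norm_num)) htop l2t
  have hC2 : ContDiff ℝ 2 (iteratedDeriv 2 u) := by
    have h : ContDiff ℝ ((2:ℕ) : WithTop ℕ∞) (iteratedDeriv 2 u) := by
      rw [contDiff_nat_iff_iteratedDeriv]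
      constructor
      · intro m hm
        rw [iterAdd]
        exact hu.continuous_iteratedDeriv _ (by exact_mod_cast (by omega : m + 2 ≤ 4))
      · intro m hm
        rw [iterAdd]
        exact hu.differentiable_iteratedDeriv _ (by exact_mod_cast (by omega : m + 2 < 4))
    exact_mod_cast h
  have l3t : Tendsto (iteratedDeriv 3 u) atTop (nhds 0) := by
    have h := lim1 hC2 l2t (by rw [iterAdd]; exact l4t)
    rwa [← iteratedDeriv_succ] at h
  -- limits at -∞ via reflection
  set v : ℝ → ℝ := fun x => u (-x) with hvdef
  have hv : ContDiff ℝ 4 v := hu.comp contDiff_neg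
  have hvtop : Tendsto v atTop (nhds 0) := hbot.comp tendsto_neg_atTop_atBot
  have h4Bv : ∀ s, |iteratedDeriv 4 v s| ≤ c^2 * B + K := fun s => by
    rw [hvdef, refl4]; exact h4B (-s)
  have l2vt : Tendsto (iteratedDeriv 2 v) atTop (nhds 0) := lim2 hv h4Bv hvtop
  have l2b : Tendsto (iteratedDeriv 2 u) atBot (nhds 0) := by
    have h := l2vt.comp tendsto_neg_atBot_atTop
    refine h.congr fun x => ?_
    show iteratedDeriv 2 v (-x) = iteratedDeriv 2 u x
    rw [hvdef, refl2, neg_neg]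
  have l4b : Tendsto (iteratedDeriv 4 u) atBot (nhds 0) := by
    have h := ((l2b.const_mul (c^2)).neg).sub hfu_b
    have e : iteratedDeriv 4 u = fun s => -(c^2 * iteratedDeriv 2 u s) - f (u s) :=
      funext hode4
    rw [e]
    simpa using h
  have l1b : Tendsto (deriv u) atBot (nhds 0) := by
    have hdv := lim1 (hv.of_le (by norm_num)) hvtop l2vt
    have h := (hdv.comp tendsto_neg_atBot_atTop).neg
    rw [neg_zero] at h
    refine h.congr fun x => ?_
    show -(deriv v (-x)) = deriv u x
    have : deriv v (-x) = iteratedDeriv 1 v (-x) := by rw [iteratedDeriv_one]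
    rw [this, hvdef, iteratedDeriv_comp_neg, neg_neg]
    simp [iteratedDeriv_one]
  have hC2v : ContDiff ℝ 2 (iteratedDeriv 2 v) := by
    have h : ContDiff ℝ ((2:ℕ) : WithTop ℕ∞) (iteratedDeriv 2 v) := by
      rw [contDiff_nat_iff_iteratedDeriv]
      constructor
      · intro m hm
        rw [iterAdd]
        exact hv.continuous_iteratedDeriv _ (by exact_mod_cast (by omega : m + 2 ≤ 4))
      · intro m hm
        rw [iterAdd]
        exact hv.differentiable_iteratedDeriv _ (by exact_mod_cast (by omega : m + 2 < 4))
    exact_mod_cast h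
  have l4vt : Tendsto (iteratedDeriv 4 v) atTop (nhds 0) := by
    have h := l4b.comp tendsto_neg_atTop_atBot
    refine h.congr fun x => ?_
    show iteratedDeriv 4 u (-x) = iteratedDeriv 4 v x
    rw [hvdef, refl4]
  have l3b : Tendsto (iteratedDeriv 3 u) atBot (nhds 0) := by
    have hdv3 := lim1 hC2v l2vt (by rw [iterAdd]; exact l4vt)
    rw [← iteratedDeriv_succ] at hdv3
    have h := (hdv3.comp tendsto_neg_atBot_atTop).neg
    rw [neg_zero] at h
    refine h.congr fun x => ?_
    show -(iteratedDeriv 3 v (-x)) = iteratedDeriv 3 u x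
    rw [hvdef, iteratedDeriv_comp_neg, neg_neg]
    norm_num
  -- the monotone quantity W
  have hder : ∀ k : ℕ, k < 4 → ∀ s, HasDerivAt (iteratedDeriv k u)
      (iteratedDeriv (k+1) u s) s := by
    intro k hk s
    have hdiff := (hu.differentiable_iteratedDeriv k (by exact_mod_cast hk)) s
    have h := hdiff.hasDerivAt
    rwa [← iteratedDeriv_succ] at h
  have hu' : ∀ s, HasDerivAt u (iteratedDeriv 1 u s) s := by
    intro s
    have h := hder 0 (by norm_num) s
    rwa [iteratedDeriv_zero] at h
  set W : ℝ → ℝ := fun s =>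
    iteratedDeriv 1 u s * iteratedDeriv 2 u s - u s * iteratedDeriv 3 u s with hWdef
  have hWd : ∀ s, HasDerivAt W
      (iteratedDeriv 2 u s ^ 2 - u s * iteratedDeriv 4 u s) s := by
    intro s
    have h := ((hder 1 (by norm_num) s).mul (hder 2 (by norm_num) s)).sub
      ((hu' s).mul (hder 3 (by norm_num) s))
    convert h using 1
    show iteratedDeriv 2 u s ^ 2 - u s * iteratedDeriv 4 u s
      = iteratedDeriv 2 u s * iteratedDeriv 2 u s + iteratedDeriv 1 u s * iteratedDeriv 3 u s
        - (iteratedDeriv 1 u s * iteratedDeriv 3 u s + u s * iteratedDeriv 4 u s)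
    ring
    all_goals rfl
  have hWdiff : Differentiable ℝ W := fun s => (hWd s).differentiableAt
  have hW' : ∀ s, deriv W s
      = (iteratedDeriv 2 u s)^2 + c^2 * (u s * iteratedDeriv 2 u s) + u s * f (u s) := by
    intro s
    rw [(hWd s).deriv, hode4 s]
    ring
  have hposq : ∀ s, u s ≠ 0 → c^4/4 * (u s)^2 < u s * f (u s) := by
    intro s hs
    have hq := hδ' (u s) hs (lt_of_le_of_lt (hbound s) hMδ)
    have hsq : 0 < (u s)^2 := by positivity
    have h2 : u s * f (u s) = (f (u s) / u s) * (u s)^2 := by field_simp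
    rw [h2]
    nlinarith [hq, hsq]
  have hW'nonneg : ∀ s, 0 ≤ deriv W s := by
    intro s
    rw [hW' s]
    rcases eq_or_ne (u s) 0 with h | h
    · simp [h]
      positivity
    · nlinarith [hposq s h, sq_nonneg (iteratedDeriv 2 u s + c^2/2 * u s)]
  have hmono : Monotone W := monotone_of_deriv_nonneg hWdiff hW'nonneg
  have hWtop : Tendsto W atTop (nhds 0) := by
    rw [hWdef]
    simp only [iteratedDeriv_one]
    have h := (l1t.mul l2t).sub (htop.mul l3t)
    simpa using h
  have hWbot : Tendsto W atBot (nhds 0) := by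
    rw [hWdef]
    simp only [iteratedDeriv_one]
    have h := (l1b.mul l2b).sub (hbot.mul l3b)
    simpa using h
  have hW0 : ∀ s, W s = 0 := by
    intro s
    have hle : W s ≤ 0 :=
      ge_of_tendsto hWtop (eventually_atTop.2 ⟨s, fun x hx => hmono hx⟩)
    have hge : 0 ≤ W s :=
      le_of_tendsto hWbot (eventually_atBot.2 ⟨s, fun x hx => hmono hx⟩)
    linarith
  obtain ⟨s₀, hs₀⟩ : ∃ s, u s ≠ 0 := by
    by_contra h
    push_neg at h
    exact hune (funext h)
  have hzero : deriv W s₀ = 0 := by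
    have hWeq : W = fun _ => (0:ℝ) := funext hW0
    rw [hWeq]
    simp
  have hfinal := hW' s₀
  rw [hzero] at hfinal
  nlinarith [hposq s₀ hs₀, sq_nonneg (iteratedDeriv 2 u s₀ + c^2/2 * u s₀), hfinal]
end

section
/- Assume f : ℝ → ℝ is locally Lipschitz, differentiable at 0 with f'(0) > 0, and f(u)/u > c⁴/4 for all u ≠ 0, where 0 < c⁴ < 4f'(0). Then the only homoclinic solution of u'''' + c²u'' + f(u) = 0 (vanishing with its first three derivatives at ±∞ and lying in H²) is u ≡ 0. -/
open Filter MeasureTheory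

-- auxiliary: continuous real function tending to 0 at ±∞ is bounded
lemma aux_bdd {u : ℝ → ℝ} (hc : Continuous u)
    (ht : Tendsto u atTop (nhds 0)) (hb : Tendsto u atBot (nhds 0)) :
    ∃ M : ℝ, 0 < M ∧ ∀ s, |u s| ≤ M := by
  have h1 : ∀ᶠ s in atTop, |u s| ≤ 1 := by
    have := ht (Metric.closedBall_mem_nhds (0:ℝ) one_pos)
    filter_upwards [this] with s hs
    simpa [Real.dist_eq] using hs
  have h2 : ∀ᶠ s in atBot, |u s| ≤ 1 := by
    have := hb (Metric.closedBall_mem_nhds (0:ℝ) one_pos)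
    filter_upwards [this] with s hs
    simpa [Real.dist_eq] using hs
  obtain ⟨A, hA⟩ := eventually_atTop.mp h1
  obtain ⟨B, hB⟩ := eventually_atBot.mp h2
  obtain ⟨C, hC⟩ := (isCompact_Icc (a := B) (b := A)).exists_bound_of_continuousOn hc.continuousOn
  refine ⟨max (max C 1) 1, lt_of_lt_of_le one_pos (le_max_right _ _), fun s => ?_⟩
  rcases le_total s B with hsB | hsB
  · exact le_trans (hB s hsB) (le_max_right _ _)
  rcases le_total A s with hsA | hsA
  · exact le_trans (hA s hsA) (le_max_right _ _)
  · have := hC s ⟨hsB, hsA⟩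
    simp only [Real.norm_eq_abs] at this
    exact le_trans this (le_trans (le_max_left _ _) (le_max_left _ _))

lemma aux_lin {f : ℝ → ℝ} {f'0 M : ℝ} (hcf : Continuous f) (hf0 : f 0 = 0)
    (hfd : HasDerivAt f f'0 0) (hM : 0 < M) :
    ∃ K : ℝ, 0 ≤ K ∧ ∀ v : ℝ, |v| ≤ M → |f v| ≤ K * |v| := by
  have hslope : Tendsto (slope f 0) (nhdsWithin 0 {(0:ℝ)}ᶜ) (nhds f'0) :=
    hasDerivAt_iff_tendsto_slope.mp hfd
  have hev : ∀ᶠ v in nhdsWithin 0 {(0:ℝ)}ᶜ, |slope f 0 v| ≤ |f'0| + 1 := by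
    have := hslope (Metric.closedBall_mem_nhds f'0 one_pos)
    filter_upwards [this] with v hv
    have hv : dist (slope f 0 v) f'0 ≤ 1 := hv
    rw [Real.dist_eq] at hv
    calc |slope f 0 v| ≤ |slope f 0 v - f'0| + |f'0| := by
          simpa using abs_add_le (slope f 0 v - f'0) f'0
      _ ≤ |f'0| + 1 := by linarith
  obtain ⟨δ, hδ, hδb⟩ := Metric.mem_nhdsWithin_iff.mp hev
  obtain ⟨C, hC⟩ := (isCompact_Icc (a := -M) (b := M)).exists_bound_of_continuousOn
    hcf.continuousOn
  set C' := max C 0 with hC'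
  have hC'0 : 0 ≤ C' := le_max_right _ _
  refine ⟨max (|f'0| + 1) (2 * C' / δ), le_trans (by positivity) (le_max_left _ _),
    fun v hv => ?_⟩
  rcases eq_or_ne v 0 with rfl | hv0
  · simp [hf0]
  rcases le_or_gt |v| (δ / 2) with hsmall | hbig
  · have hvd : v ∈ Metric.ball (0:ℝ) δ ∩ {(0:ℝ)}ᶜ := by
      constructor
      · rw [Metric.mem_ball, Real.dist_eq]; simp only [sub_zero]; linarith
      · simpa using hv0
    have : |slope f 0 v| ≤ |f'0| + 1 := hδb hvd
    have hs : slope f 0 v = f v / v := by simp [slope_def_field, hf0]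
    rw [hs, abs_div] at this
    have hav : 0 < |v| := abs_pos.mpr hv0
    have : |f v| ≤ (|f'0| + 1) * |v| := by
      rw [div_le_iff₀ hav] at this; linarith
    exact le_trans this (mul_le_mul_of_nonneg_right (le_max_left _ _) (abs_nonneg _))
  · have hmem : v ∈ Set.Icc (-M) M := abs_le.mp hv
    have h1 : |f v| ≤ C' := le_trans (by simpa using hC v hmem) (le_max_left _ _)
    have h2 : C' ≤ 2 * C' / δ * |v| := by
      rw [div_mul_eq_mul_div, le_div_iff₀ hδ]
      nlinarith
    exact le_trans (le_trans h1 h2)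
      (mul_le_mul_of_nonneg_right (le_max_right _ _) (abs_nonneg _))

theorem stmt_7 (c : ℝ) (f u : ℝ → ℝ) (f'0 : ℝ)
    (hf : LocallyLipschitz f)
    (hfd : HasDerivAt f f'0 0) (hf'0 : 0 < f'0)
    (hc : 0 < c ^ 4) (hc' : c ^ 4 < 4 * f'0)
    (hratio : ∀ v : ℝ, v ≠ 0 → f v / v > c ^ 4 / 4)
    (hu : ContDiff ℝ 4 u)
    (hode : ∀ s, iteratedDeriv 4 u s + c ^ 2 * iteratedDeriv 2 u s + f (u s) = 0)
    (hlimtop : ∀ k, k ≤ 3 → Tendsto (iteratedDeriv k u) atTop (nhds 0))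
    (hlimbot : ∀ k, k ≤ 3 → Tendsto (iteratedDeriv k u) atBot (nhds 0))
    (hu2 : Integrable (fun s => (u s) ^ 2))
    (hu'2 : Integrable (fun s => (deriv u s) ^ 2))
    (hu''2 : Integrable (fun s => (iteratedDeriv 2 u s) ^ 2)) :
    ∀ s, u s = 0 := by
  have hcf : Continuous f := hf.continuous
  -- f 0 = 0
  have hf0 : f 0 = 0 := by
    have hq : (0:ℝ) < c ^ 4 / 4 := by positivity
    have h1 : f 0 ≤ 0 := by
      have ht : Tendsto f (nhdsWithin 0 (Set.Iio 0)) (nhds (f 0)) :=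
        (hcf.tendsto 0).mono_left nhdsWithin_le_nhds
      refine le_of_tendsto ht ?_
      filter_upwards [self_mem_nhdsWithin] with v hv
      have hv0 : v < 0 := hv
      have h := lt_trans hq (hratio v (ne_of_lt hv0))
      rcases div_pos_iff.mp h with ⟨_, h2⟩ | ⟨h1, _⟩
      · linarith
      · linarith
    have h2 : 0 ≤ f 0 := by
      have ht : Tendsto f (nhdsWithin 0 (Set.Ioi 0)) (nhds (f 0)) :=
        (hcf.tendsto 0).mono_left nhdsWithin_le_nhds
      refine ge_of_tendsto ht ?_
      filter_upwards [self_mem_nhdsWithin] with v hv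
      have hv0 : (0:ℝ) < v := hv
      have h := lt_trans hq (hratio v (ne_of_gt hv0))
      rcases div_pos_iff.mp h with ⟨h1, _⟩ | ⟨_, h2⟩
      · linarith
      · linarith
    linarith
  -- strict key inequality
  have keylt : ∀ v : ℝ, v ≠ 0 → c ^ 4 / 4 * v ^ 2 < f v * v := by
    intro v hv
    have h := hratio v hv
    have hv2 : (0:ℝ) < v ^ 2 := by positivity
    have h2 : c ^ 4 / 4 * v ^ 2 < f v / v * v ^ 2 := by
      exact mul_lt_mul_of_pos_right h hv2
    have h3 : f v / v * v ^ 2 = f v * v := by field_simp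
    linarith [h3 ▸ h2]
  have key : ∀ v : ℝ, c ^ 4 / 4 * v ^ 2 ≤ f v * v := by
    intro v
    rcases eq_or_ne v 0 with rfl | hv
    · simp
    · exact le_of_lt (keylt v hv)
  -- derivative structure
  have hd : ∀ k : ℕ, k < 4 → ∀ s, HasDerivAt (iteratedDeriv k u)
      (iteratedDeriv (k + 1) u s) s := by
    intro k hk s
    rw [iteratedDeriv_succ]
    exact ((hu.differentiable_iteratedDeriv k (by exact_mod_cast hk)) s).hasDerivAt
  have hd0 : ∀ s, HasDerivAt u (iteratedDeriv 1 u s) s := by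
    intro s
    have := hd 0 (by norm_num) s
    rwa [iteratedDeriv_zero] at this
  have hcont : ∀ k : ℕ, k ≤ 4 → Continuous (iteratedDeriv k u) := by
    intro k hk
    exact hu.continuous_iteratedDeriv k (by exact_mod_cast hk)
  have hu1sq : Integrable (fun s => (iteratedDeriv 1 u s) ^ 2) := by
    simpa [iteratedDeriv_one] using hu'2
  -- bound on u and linear bound on f
  have hutop : Tendsto u atTop (nhds 0) := by
    simpa [iteratedDeriv_zero] using hlimtop 0 (by norm_num)
  have hubot : Tendsto u atBot (nhds 0) := by
    simpa [iteratedDeriv_zero] using hlimbot 0 (by norm_num)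
  obtain ⟨M, hM, hMu⟩ := aux_bdd hu.continuous hutop hubot
  obtain ⟨K, hK0, hKb⟩ := aux_lin hcf hf0 hfd hM
  -- integrability of f(u)·u
  have hfu_int : Integrable (fun s => f (u s) * u s) := by
    refine (hu2.const_mul K).mono'
      (((hcf.comp hu.continuous).mul hu.continuous).aestronglyMeasurable) ?_
    refine Eventually.of_forall fun s => ?_
    have h1 : |f (u s)| ≤ K * |u s| := hKb (u s) (hMu s)
    have h2 : ‖f (u s) * u s‖ = |f (u s)| * |u s| := by
      rw [Real.norm_eq_abs, abs_mul]
    rw [h2]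
    calc |f (u s)| * |u s| ≤ K * |u s| * |u s| :=
          mul_le_mul_of_nonneg_right h1 (abs_nonneg _)
      _ = K * (|u s| * |u s|) := by ring
      _ = K * (u s) ^ 2 := by rw [← sq_abs (u s)]; ring
  -- integrability of u''·u
  have hBu_int : Integrable (fun s => iteratedDeriv 2 u s * u s) := by
    refine (hu''2.add hu2).mono'
      (((hcont 2 (by norm_num)).mul hu.continuous).aestronglyMeasurable) ?_
    refine Eventually.of_forall fun s => ?_
    rw [Real.norm_eq_abs, abs_mul]
    simp only [Pi.add_apply]
    nlinarith [sq_nonneg (|iteratedDeriv 2 u s| - |u s|), sq_abs (iteratedDeriv 2 u s),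
      sq_abs (u s), abs_nonneg (iteratedDeriv 2 u s), abs_nonneg (u s)]
  -- first integral identity
  set g1 : ℝ → ℝ := fun s => -(f (u s) * u s) - (iteratedDeriv 2 u s) ^ 2
      + c ^ 2 * (iteratedDeriv 1 u s) ^ 2 with hg1
  have hg1int : Integrable g1 := (hfu_int.neg.sub hu''2).add (hu1sq.const_mul (c ^ 2))
  set F : ℝ → ℝ := fun s => iteratedDeriv 3 u s * u s
      - iteratedDeriv 2 u s * iteratedDeriv 1 u s
      + c ^ 2 * (iteratedDeriv 1 u s * u s) with hF
  have hFd : ∀ s, HasDerivAt F (g1 s) s := by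
    intro s
    have H := (((hd 3 (by norm_num) s).mul (hd0 s)).sub
        ((hd 2 (by norm_num) s).mul (hd 1 (by norm_num) s))).add
      (((hd 1 (by norm_num) s).mul (hd0 s)).const_mul (c ^ 2))
    refine H.congr_deriv ?_
    have h := hode s
    simp only [hg1]
    linear_combination (u s) * h
  have hFtop : Tendsto F atTop (nhds 0) := by
    have h := (((hlimtop 3 (by norm_num)).mul hutop).sub
        ((hlimtop 2 (by norm_num)).mul (hlimtop 1 (by norm_num)))).add
      (((hlimtop 1 (by norm_num)).mul hutop).const_mul (c ^ 2))
    simpa only [mul_zero, sub_zero, add_zero, zero_mul, zero_sub, zero_add, neg_zero] using h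
  have hFbot : Tendsto F atBot (nhds 0) := by
    have h := (((hlimbot 3 (by norm_num)).mul hubot).sub
        ((hlimbot 2 (by norm_num)).mul (hlimbot 1 (by norm_num)))).add
      (((hlimbot 1 (by norm_num)).mul hubot).const_mul (c ^ 2))
    simpa only [mul_zero, sub_zero, add_zero, zero_mul, zero_sub, zero_add, neg_zero] using h
  have hI1 : ∫ s, g1 s = 0 := by
    have := integral_of_hasDerivAt_of_tendsto hFd hg1int hFbot hFtop
    simpa using this
  -- second integral identity
  set g2 : ℝ → ℝ := fun s => iteratedDeriv 2 u s * u s + (iteratedDeriv 1 u s) ^ 2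
    with hg2
  have hg2int : Integrable g2 := hBu_int.add hu1sq
  set G : ℝ → ℝ := fun s => iteratedDeriv 1 u s * u s with hG
  have hGd : ∀ s, HasDerivAt G (g2 s) s := by
    intro s
    have H := (hd 1 (by norm_num) s).mul (hd0 s)
    refine H.congr_deriv ?_
    simp only [hg2]; ring
  have hGtop : Tendsto G atTop (nhds 0) := by
    simpa only [mul_zero] using (hlimtop 1 (by norm_num)).mul hutop
  have hGbot : Tendsto G atBot (nhds 0) := by
    simpa only [mul_zero] using (hlimbot 1 (by norm_num)).mul hubot
  have hI2 : ∫ s, g2 s = 0 := by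
    have := integral_of_hasDerivAt_of_tendsto hGd hg2int hGbot hGtop
    simpa using this
  -- combined nonnegative integrand
  set g : ℝ → ℝ := fun s => f (u s) * u s + (iteratedDeriv 2 u s) ^ 2
      + c ^ 2 * (iteratedDeriv 2 u s * u s) with hg
  have hgint : Integrable g := (hfu_int.add hu''2).add (hBu_int.const_mul (c ^ 2))
  have hIg : ∫ s, g s = 0 := by
    have heq : g = fun s => -(g1 s) + c ^ 2 * g2 s := by
      funext s; simp only [hg, hg1, hg2]; ring
    have hneg : Integrable (fun s => -(g1 s)) := hg1int.neg
    rw [heq, integral_add hneg (hg2int.const_mul _), integral_neg,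
      integral_const_mul, hI1, hI2]
    ring
  have hgnn : ∀ s, 0 ≤ g s := by
    intro s
    have h1 := key (u s)
    have h2 := sq_nonneg (iteratedDeriv 2 u s + c ^ 2 / 2 * u s)
    simp only [hg]
    nlinarith
  have hae : g =ᵐ[volume] 0 :=
    (integral_eq_zero_iff_of_nonneg hgnn hgint).mp hIg
  have hgcont : Continuous g := by
    simp only [hg]
    exact (((hcf.comp hu.continuous).mul hu.continuous).add
      ((hcont 2 (by norm_num)).pow 2)).add
      (continuous_const.mul ((hcont 2 (by norm_num)).mul hu.continuous))
  have hgeq : ∀ s, g s = 0 := by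
    have := (hgcont.ae_eq_iff_eq volume continuous_zero).mp hae
    intro s; exact congrFun this s
  intro s
  by_contra hs
  have h1 := keylt (u s) hs
  have h2 := sq_nonneg (iteratedDeriv 2 u s + c ^ 2 / 2 * u s)
  have h3 := hgeq s
  simp only [hg] at h3
  nlinarith
end

section
/- Suppose f satisfies: f locally Lipschitz, u·f(u) > 0 for u ≠ 0, f differentiable at 0 with f'(0) > 0, and additionally for each fixed M > 0 there is c₀ > 0 with f(u)/u > c⁴/4 for all 0 < |u| ≤ M whenever 0 < c < c₀. Then for any family u_c of nonzero homoclinic solutions of u'''' + c²u'' + f(u) = 0, sup_s |u_c(s)| → ∞ as c → 0. -/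
open Filter MeasureTheory
open intervalIntegral

lemma aux_taylor (g g1 g2 : ℝ → ℝ)
    (h1 : ∀ t, HasDerivAt g (g1 t) t)
    (h2 : ∀ t, HasDerivAt g1 (g2 t) t)
    (hc : Continuous g2)
    (a K : ℝ)
    (hbd : ∀ t, 0 ≤ t → t ≤ 1 → a - K * t ^ 2 ≤ g2 t) :
    ∀ x, 0 ≤ x → x ≤ 1 → g 0 + g1 0 * x + a * x ^ 2 / 2 - K * x ^ 4 / 12 ≤ g x := by
  have hg1c : Continuous g1 := by
    rw [continuous_iff_continuousAt]; exact fun t => (h2 t).continuousAt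
  have hstep1 : ∀ t, 0 ≤ t → t ≤ 1 → g1 0 + (a * t - K * t ^ 3 / 3) ≤ g1 t := by
    intro t ht0 ht1
    have hfund : g1 t - g1 0 = ∫ r in (0:ℝ)..t, g2 r :=
      (integral_eq_sub_of_hasDerivAt (fun r _ => h2 r)
        (hc.intervalIntegrable _ _)).symm
    have hcomp : ∫ r in (0:ℝ)..t, (a - K * r ^ 2) = a * t - K * t ^ 3 / 3 := by
      have : ∀ r ∈ Set.uIcc (0:ℝ) t,
          HasDerivAt (fun r => a * r - K * r ^ 3 / 3) (a - K * r ^ 2) r := by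
        intro r _
        have h' : HasDerivAt (fun r : ℝ => a * r - K * r ^ 3 / 3)
            (a * 1 - K * (3 * r ^ 2) / 3) r := by
          exact ((hasDerivAt_id r).const_mul a).sub
            (((hasDerivAt_pow 3 r).const_mul K).div_const 3)
        convert h' using 1; ring
      rw [integral_eq_sub_of_hasDerivAt this
        ((by fun_prop : Continuous _).intervalIntegrable _ _)]
      ring
    have hmono : ∫ r in (0:ℝ)..t, (a - K * r ^ 2) ≤ ∫ r in (0:ℝ)..t, g2 r := by
      apply integral_mono_on ht0 ((by fun_prop : Continuous _).intervalIntegrable _ _)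
        (hc.intervalIntegrable _ _)
      intro r hr
      exact hbd r hr.1 (hr.2.trans ht1)
    linarith [hmono, hcomp ▸ hmono]
  intro x hx0 hx1
  have hfund : g x - g 0 = ∫ t in (0:ℝ)..x, g1 t :=
    (integral_eq_sub_of_hasDerivAt (fun r _ => h1 r)
      (hg1c.intervalIntegrable _ _)).symm
  have hcomp : ∫ t in (0:ℝ)..x, (g1 0 + (a * t - K * t ^ 3 / 3))
      = g1 0 * x + (a * x ^ 2 / 2 - K * x ^ 4 / 12) := by
    have : ∀ t ∈ Set.uIcc (0:ℝ) x,
        HasDerivAt (fun t => g1 0 * t + (a * t ^ 2 / 2 - K * t ^ 4 / 12))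
          (g1 0 + (a * t - K * t ^ 3 / 3)) t := by
      intro t _
      have h' : HasDerivAt (fun t : ℝ => g1 0 * t + (a * t ^ 2 / 2 - K * t ^ 4 / 12))
          (g1 0 * 1 + (a * (2 * t ^ 1) / 2 - K * (4 * t ^ 3) / 12)) t :=
        ((hasDerivAt_id t).const_mul (g1 0)).add
          ((((hasDerivAt_pow 2 t).const_mul a).div_const 2).sub
            (((hasDerivAt_pow 4 t).const_mul K).div_const 12))
      convert h' using 1; ring
    rw [integral_eq_sub_of_hasDerivAt this
      ((by fun_prop : Continuous _).intervalIntegrable _ _)]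
    ring
  have hmono : ∫ t in (0:ℝ)..x, (g1 0 + (a * t - K * t ^ 3 / 3))
      ≤ ∫ t in (0:ℝ)..x, g1 t := by
    apply integral_mono_on hx0 ((by fun_prop : Continuous _).intervalIntegrable _ _)
      (hg1c.intervalIntegrable _ _)
    intro t ht
    exact hstep1 t ht.1 (ht.2.trans hx1)
  linarith

lemma hshift (g g1 : ℝ → ℝ) (h1 : ∀ t, HasDerivAt g (g1 t) t) (s : ℝ) :
    ∀ t, HasDerivAt (fun t => g (s + t)) (g1 (s + t)) t := by
  intro t
  have := (h1 (s + t)).comp t ((hasDerivAt_id t).const_add s)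
  simpa [Function.comp_def] using this

lemma hshiftneg (g g1 : ℝ → ℝ) (h1 : ∀ t, HasDerivAt g (g1 t) t) (s : ℝ) :
    ∀ t, HasDerivAt (fun t => g (s - t)) (-g1 (s - t)) t := by
  intro t
  have := (h1 (s - t)).comp t ((hasDerivAt_id t).const_sub s)
  simpa [Function.comp_def] using this

lemma aux_landau (g g1 g2 : ℝ → ℝ)
    (h1 : ∀ t, HasDerivAt g (g1 t) t)
    (h2 : ∀ t, HasDerivAt g1 (g2 t) t)
    (hc : Continuous g2) (A K : ℝ)
    (hA : ∀ t, |g t| ≤ A) (hK : ∀ t, |g2 t| ≤ K) :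
    ∀ s, |g1 s| ≤ 2 * A + K / 2 := by
  intro s
  have hub := aux_taylor (fun t => g (s + t)) (fun t => g1 (s + t)) (fun t => g2 (s + t))
    (hshift g g1 h1 s) (hshift g1 g2 h2 s) (by fun_prop) (-K) 0
    (fun t _ _ => by simpa using (abs_le.mp (hK (s + t))).1) 1 zero_le_one le_rfl
  have hlb := aux_taylor (fun t => -g (s + t)) (fun t => -g1 (s + t)) (fun t => -g2 (s + t))
    (fun t => (hshift g g1 h1 s t).neg) (fun t => (hshift g1 g2 h2 s t).neg)
    (by fun_prop) (-K) 0
    (fun t _ _ => by simpa using (abs_le.mp (hK (s + t))).2) 1 zero_le_one le_rfl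
  simp only [add_zero] at hub hlb
  have a1 := abs_le.mp (hA (s + 1))
  have a0 := abs_le.mp (hA s)
  rw [abs_le]
  constructor <;> nlinarith [a1.1, a1.2, a0.1, a0.2]

set_option linter.unreachableTactic false in
set_option linter.unnecessarySeqFocus false in
set_option linter.unusedTactic false in
lemma aux_wbound (u u1 u2 u3 u4 : ℝ → ℝ)
    (h1 : ∀ t, HasDerivAt u (u1 t) t)
    (h2 : ∀ t, HasDerivAt u1 (u2 t) t)
    (h3 : ∀ t, HasDerivAt u2 (u3 t) t)
    (h4 : ∀ t, HasDerivAt u3 (u4 t) t)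
    (hc2 : Continuous u2) (hc4 : Continuous u4)
    (c B K0 : ℝ)
    (hB : ∀ s, |u s| ≤ B)
    (hK : ∀ s, |u4 s + c ^ 2 * u2 s| ≤ K0) :
    ∀ s, u2 s + c ^ 2 * u s ≤ 4 * B + c ^ 2 * B + K0 / 12 := by
  intro s
  set w : ℝ → ℝ := fun t => u2 t + c ^ 2 * u t with hw
  have hw1 : ∀ t, HasDerivAt w (u3 t + c ^ 2 * u1 t) t :=
    fun t => (h3 t).add ((h1 t).const_mul _)
  have hw2 : ∀ t, HasDerivAt (fun t => u3 t + c ^ 2 * u1 t) (u4 t + c ^ 2 * u2 t) t :=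
    fun t => (h4 t).add ((h2 t).const_mul _)
  have hpsi := aux_taylor (fun t => w (s + t) + w (s - t))
    (fun t => (u3 (s + t) + c ^ 2 * u1 (s + t)) - (u3 (s - t) + c ^ 2 * u1 (s - t)))
    (fun t => (u4 (s + t) + c ^ 2 * u2 (s + t)) + (u4 (s - t) + c ^ 2 * u2 (s - t)))
    (fun t => by
      have h := (hshift w _ hw1 s t).add (hshiftneg w _ hw1 s t)
      exact h.congr_deriv (by ring))
    (fun t => by
      have h := (hshift _ _ hw2 s t).sub (hshiftneg _ _ hw2 s t)
      exact h.congr_deriv (by ring))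
    (by have : Continuous (fun t => u4 t + c ^ 2 * u2 t) := by fun_prop
        fun_prop)
    (-(2 * K0)) 0
    (fun t _ _ => by
      have a1 := (abs_le.mp (hK (s + t))).1
      have a2 := (abs_le.mp (hK (s - t))).1
      simp only [zero_mul, sub_zero]
      linarith)
  have hphi := aux_taylor (fun t => u (s + t) + u (s - t))
    (fun t => u1 (s + t) - u1 (s - t))
    (fun t => u2 (s + t) + u2 (s - t))
    (fun t => by
      have h := (hshift u _ h1 s t).add (hshiftneg u _ h1 s t)
      exact h.congr_deriv (by ring))
    (fun t => by
      have h := (hshift u1 _ h2 s t).sub (hshiftneg u1 _ h2 s t)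
      exact h.congr_deriv (by ring))
    (by fun_prop)
    (2 * (w s) - 2 * (c ^ 2 * B)) K0
    (fun t ht0 ht1 => by
      have hp := hpsi t ht0 ht1
      simp only [add_zero, sub_zero, sub_self, zero_mul, mul_zero] at hp
      have hb1 := (abs_le.mp (hB (s + t))).2
      have hb2 := (abs_le.mp (hB (s - t))).2
      simp only [hw] at hp ⊢
      nlinarith [hp]) 1 zero_le_one le_rfl
  simp only [add_zero, sub_zero, sub_self, zero_mul, mul_zero, one_pow, mul_one] at hphi
  have hb1 := (abs_le.mp (hB (s + 1))).2
  have hb2 := (abs_le.mp (hB (s - 1))).2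
  have hb0 := (abs_le.mp (hB s)).1
  simp only [hw] at hphi ⊢
  nlinarith [hphi]

lemma aux_key (F : ℝ → ℝ) (hFc : Continuous F) (u u1 u2 u3 u4 : ℝ → ℝ)
    (h1 : ∀ t, HasDerivAt u (u1 t) t)
    (h2 : ∀ t, HasDerivAt u1 (u2 t) t)
    (h3 : ∀ t, HasDerivAt u2 (u3 t) t)
    (h4 : ∀ t, HasDerivAt u3 (u4 t) t)
    (hcu2 : Continuous u2) (hcu3 : Continuous u3) (hcu4 : Continuous u4)
    (c L R : ℝ) (hLR : L ≤ R)
    (hode : ∀ s, u4 s + c ^ 2 * u2 s + F (u s) = 0) :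
    ∫ s in L..R, (u s * F (u s) - c ^ 4 / 4 * (u s) ^ 2)
      ≤ u L * u3 L - u R * u3 R + u1 R * u2 R - u1 L * u2 L := by
  have hcu : Continuous u := by
    rw [continuous_iff_continuousAt]; exact fun t => (h1 t).continuousAt
  have hcu1 : Continuous u1 := by
    rw [continuous_iff_continuousAt]; exact fun t => (h2 t).continuousAt
  have ibp1 : ∫ s in L..R, u s * u4 s
      = u R * u3 R - u L * u3 L - ∫ s in L..R, u1 s * u3 s :=
    integral_mul_deriv_eq_deriv_mul (fun x _ => h1 x) (fun x _ => h4 x)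
      (hcu1.intervalIntegrable _ _) (hcu4.intervalIntegrable _ _)
  have ibp2 : ∫ s in L..R, u1 s * u3 s
      = u1 R * u2 R - u1 L * u2 L - ∫ s in L..R, u2 s * u2 s :=
    integral_mul_deriv_eq_deriv_mul (fun x _ => h2 x) (fun x _ => h3 x)
      (hcu2.intervalIntegrable _ _) (hcu3.intervalIntegrable _ _)
  have hmono : ∫ s in L..R, (u s * F (u s) - c ^ 4 / 4 * (u s) ^ 2)
      ≤ ∫ s in L..R, (-(u s * u4 s) + u2 s * u2 s) := by
    apply integral_mono_on hLR
      (((hcu.mul (hFc.comp hcu)).sub ((continuous_const.mul (hcu.pow 2)))).intervalIntegrable _ _)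
      (((hcu.mul hcu4).neg.add (hcu2.mul hcu2)).intervalIntegrable _ _)
    intro s _
    show u s * F (u s) - c ^ 4 / 4 * (u s) ^ 2 ≤ -(u s * u4 s) + u2 s * u2 s
    have h := hode s
    have hF : u s * F (u s) = -(u s * u4 s) - c ^ 2 * (u s * u2 s) := by
      have : F (u s) = -u4 s - c ^ 2 * u2 s := by linarith
      rw [this]; ring
    nlinarith [hF, sq_nonneg (u2 s + c ^ 2 * u s / 2)]
  have hsplit : ∫ s in L..R, (-(u s * u4 s) + u2 s * u2 s)
      = -(∫ s in L..R, u s * u4 s) + ∫ s in L..R, u2 s * u2 s := by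
    rw [integral_add (f := fun s => -(u s * u4 s)) (g := fun s => u2 s * u2 s) ((hcu.mul hcu4).neg.intervalIntegrable _ _)
      ((hcu2.mul hcu2).intervalIntegrable _ _),
      intervalIntegral.integral_neg]
  linarith

lemma aux_pos (g : ℝ → ℝ) (hg : Continuous g) (hg0 : ∀ s, 0 ≤ g s)
    (s₀ : ℝ) (hpos : 0 < g s₀) :
    ∃ η > 0, ∀ L R : ℝ, L ≤ s₀ - 1 → s₀ + 1 ≤ R → η ≤ ∫ s in L..R, g s := by
  obtain ⟨δ, hδ, hball⟩ := Metric.continuousAt_iff.mp (hg.continuousAt (x := s₀)) (g s₀ / 2)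
    (by positivity)
  set δ' := min (δ / 2) 1 with hδ'def
  have hδ'0 : 0 < δ' := by positivity
  have hδ'1 : δ' ≤ 1 := min_le_right _ _
  have hhalf : ∀ t ∈ Set.Icc (s₀ - δ') (s₀ + δ'), g s₀ / 2 ≤ g t := by
    intro t ht
    have hd : dist t s₀ < δ := by
      rw [Real.dist_eq, abs_lt]
      have h1 := ht.1; have h2 := ht.2
      have : δ' ≤ δ / 2 := min_le_left _ _
      constructor <;> linarith
    have := hball hd
    rw [Real.dist_eq, abs_lt] at this
    linarith [this.1]
  refine ⟨δ' * g s₀, by positivity, ?_⟩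
  intro L R hL hR
  have hab : L ≤ s₀ - δ' := by linarith
  have hbc : s₀ - δ' ≤ s₀ + δ' := by linarith
  have hcd : s₀ + δ' ≤ R := by linarith
  have hint : ∀ a b : ℝ, IntervalIntegrable g MeasureTheory.volume a b :=
    fun a b => hg.intervalIntegrable a b
  have e1 : ∫ s in L..R, g s = (∫ s in L..(s₀ - δ'), g s) + ∫ s in (s₀ - δ')..R, g s :=
    (integral_add_adjacent_intervals (hint _ _) (hint _ _)).symm
  have e2 : ∫ s in (s₀ - δ')..R, g s
      = (∫ s in (s₀ - δ')..(s₀ + δ'), g s) + ∫ s in (s₀ + δ')..R, g s :=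
    (integral_add_adjacent_intervals (hint _ _) (hint _ _)).symm
  have p1 : 0 ≤ ∫ s in L..(s₀ - δ'), g s :=
    integral_nonneg hab (fun t _ => hg0 t)
  have p3 : 0 ≤ ∫ s in (s₀ + δ')..R, g s :=
    integral_nonneg hcd (fun t _ => hg0 t)
  have p2 : δ' * g s₀ ≤ ∫ s in (s₀ - δ')..(s₀ + δ'), g s := by
    have hm : ∫ s in (s₀ - δ')..(s₀ + δ'), (g s₀ / 2) ≤ ∫ s in (s₀ - δ')..(s₀ + δ'), g s := by
      apply integral_mono_on hbc (intervalIntegrable_const) (hint _ _)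
      exact fun t ht => hhalf t ht
    rw [intervalIntegral.integral_const, smul_eq_mul] at hm
    have : (s₀ + δ' - (s₀ - δ')) * (g s₀ / 2) = δ' * g s₀ := by ring
    linarith
  linarith

lemma aux_small_top (u u1 : ℝ → ℝ) (h1 : ∀ t, HasDerivAt u (u1 t) t)
    (htop : Tendsto u atTop (nhds 0)) :
    ∀ ε > (0:ℝ), ∀ X : ℝ, ∃ R, X ≤ R ∧ |u R| ≤ ε ∧ |u1 R| ≤ ε := by
  intro ε hε X
  obtain ⟨N, hN⟩ := (Metric.tendsto_atTop.mp htop) (ε / 2) (by positivity)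
  set a := max X N with ha
  have hNa : ∀ t, a ≤ t → |u t| ≤ ε / 2 := by
    intro t ht
    have := hN t (le_trans (le_max_right _ _) ht)
    rw [Real.dist_eq, sub_zero] at this
    linarith [this.le]
  obtain ⟨ξ, hξmem, hξ⟩ := exists_hasDerivAt_eq_slope u u1 (by linarith : a < a + 1)
    (fun t _ => (h1 t).continuousAt.continuousWithinAt)
    (fun t _ => h1 t)
  refine ⟨ξ, le_trans (le_max_left X N) hξmem.1.le, hNa ξ hξmem.1.le |>.trans (by linarith), ?_⟩
  rw [hξ]
  simp only [add_sub_cancel_left, div_one]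
  have h1' := hNa (a + 1) (by linarith)
  have h2' := hNa a le_rfl
  calc |u (a + 1) - u a| ≤ |u (a + 1)| + |u a| := abs_sub _ _
    _ ≤ ε := by linarith

lemma aux_small_bot (u u1 : ℝ → ℝ) (h1 : ∀ t, HasDerivAt u (u1 t) t)
    (hbot : Tendsto u atBot (nhds 0)) :
    ∀ ε > (0:ℝ), ∀ X : ℝ, ∃ L, L ≤ X ∧ |u L| ≤ ε ∧ |u1 L| ≤ ε := by
  intro ε hε X
  obtain ⟨N, hN⟩ := Filter.eventually_atBot.mp
    (Metric.tendsto_nhds.mp hbot (ε / 2) (by positivity))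
  set a := min X N with ha
  have hNa : ∀ t, t ≤ a → |u t| ≤ ε / 2 := by
    intro t ht
    have := hN t (le_trans ht (min_le_right _ _))
    rw [Real.dist_eq, sub_zero] at this
    exact le_of_lt (lt_of_le_of_lt le_rfl this) |>.trans le_rfl
  obtain ⟨ξ, hξmem, hξ⟩ := exists_hasDerivAt_eq_slope u u1 (by linarith : a - 1 < a)
    (fun t _ => (h1 t).continuousAt.continuousWithinAt)
    (fun t _ => h1 t)
  refine ⟨ξ, le_trans hξmem.2.le (min_le_left X N), hNa ξ hξmem.2.le |>.trans (by linarith), ?_⟩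
  rw [hξ]
  simp only [sub_sub_cancel, div_one]
  have h1' := hNa (a - 1) (by linarith)
  have h2' := hNa a le_rfl
  calc |u a - u (a - 1)| ≤ |u a| + |u (a - 1)| := abs_sub _ _
    _ ≤ ε := by linarith

set_option maxHeartbeats 1000000 in
theorem stmt_10 (f : ℝ → ℝ) (f'0 : ℝ) (U : ℝ → ℝ → ℝ)
    (hf : LocallyLipschitz f)
    (hsign : ∀ v : ℝ, v ≠ 0 → v * f v > 0)
    (hfd : HasDerivAt f f'0 0) (hf'0 : 0 < f'0)
    (hthreshold : ∀ M > 0, ∃ c₀ > 0, ∀ c : ℝ, 0 < c → c < c₀ →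
      ∀ v : ℝ, v ≠ 0 → |v| ≤ M → f v / v > c ^ 4 / 4)
    (hfam : ∀ c : ℝ, 0 < c → c ^ 4 < 4 * f'0 →
      ContDiff ℝ 4 (U c) ∧ U c ≠ 0 ∧
      (∀ s, iteratedDeriv 4 (U c) s + c ^ 2 * iteratedDeriv 2 (U c) s + f (U c s) = 0) ∧
      Tendsto (U c) atTop (nhds 0) ∧ Tendsto (U c) atBot (nhds 0)) :
    ∀ M : ℝ, ∃ c₀ > 0, ∀ c : ℝ, 0 < c → c < c₀ →
      ∀ B : ℝ, (∀ s, |U c s| ≤ B) → M ≤ B := by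
  intro M
  by_cases hM : 0 < M
  case neg =>
    refine ⟨1, one_pos, ?_⟩
    intro c hc hcc B hB
    have h0 : (0:ℝ) ≤ B := le_trans (abs_nonneg _) (hB 0)
    push_neg at hM
    linarith
  case pos =>
  obtain ⟨c₀, hc₀, hthr⟩ := hthreshold M hM
  refine ⟨min c₀ (min 1 (4 * f'0)), lt_min hc₀ (lt_min one_pos (by linarith)), ?_⟩
  intro c hc hcc B hB
  by_contra hBM
  push_neg at hBM
  have hcc₀ : c < c₀ := lt_of_lt_of_le hcc (min_le_left _ _)
  have hc1 : c < 1 := lt_of_lt_of_le hcc ((min_le_right _ _).trans (min_le_left _ _))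
  have hcf : c < 4 * f'0 := lt_of_lt_of_le hcc ((min_le_right _ _).trans (min_le_right _ _))
  have hc4 : c ^ 4 < 4 * f'0 := by
    have hpow : c ^ 3 ≤ 1 := pow_le_one₀ hc.le hc1.le
    have h4le : c ^ 4 ≤ c := by
      calc c ^ 4 = c * c ^ 3 := by ring
        _ ≤ c * 1 := mul_le_mul_of_nonneg_left hpow hc.le
        _ = c := mul_one c
    linarith
  obtain ⟨hu, hne, hode0, htop, hbot⟩ := hfam c hc hc4
  set u : ℝ → ℝ := U c with hu_def
  set u1 := deriv u with hu1
  set u2 := deriv u1 with hu2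
  set u3 := deriv u2 with hu3
  set u4 := deriv u3 with hu4
  have e4 : (4 : WithTop ℕ∞) = 3 + 1 := by norm_num
  have e3 : (3 : WithTop ℕ∞) = 2 + 1 := by norm_num
  have e2 : (2 : WithTop ℕ∞) = 1 + 1 := by norm_num
  have s1 := contDiff_succ_iff_deriv.mp (e4 ▸ hu)
  have s2 := contDiff_succ_iff_deriv.mp (e3 ▸ s1.2.2)
  have s3 := contDiff_succ_iff_deriv.mp (e2 ▸ s2.2.2)
  have s4 := contDiff_one_iff_deriv.mp s3.2.2
  have h1 : ∀ t, HasDerivAt u (u1 t) t := fun t => (s1.1 t).hasDerivAt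
  have h2 : ∀ t, HasDerivAt u1 (u2 t) t := fun t => (s2.1 t).hasDerivAt
  have h3 : ∀ t, HasDerivAt u2 (u3 t) t := fun t => (s3.1 t).hasDerivAt
  have h4 : ∀ t, HasDerivAt u3 (u4 t) t := fun t => (s4.1 t).hasDerivAt
  have hcu2 : Continuous u2 := by
    rw [continuous_iff_continuousAt]; exact fun t => (h3 t).continuousAt
  have hcu3 : Continuous u3 := by
    rw [continuous_iff_continuousAt]; exact fun t => (h4 t).continuousAt
  have hcu : Continuous u := by
    rw [continuous_iff_continuousAt]; exact fun t => (h1 t).continuousAt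
  have hode : ∀ s, u4 s + c ^ 2 * u2 s + f (u s) = 0 := by
    intro s
    have hid4 : iteratedDeriv 4 u = u4 := by
      simp [iteratedDeriv_succ, iteratedDeriv_zero, hu1, hu2, hu3, hu4]
    have hid2 : iteratedDeriv 2 u = u2 := by
      simp [iteratedDeriv_succ, iteratedDeriv_zero, hu1, hu2]
    have := hode0 s
    rw [hid4, hid2] at this
    exact this
  have hcu4 : Continuous u4 := by
    have : u4 = fun s => -(c ^ 2 * u2 s) - f (u s) := by
      funext s; have := hode s; linarith
    rw [this]
    exact ((continuous_const.mul hcu2).neg).sub (hf.continuous.comp hcu)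
  have hB0 : 0 ≤ B := le_trans (abs_nonneg _) (hB 0)
  obtain ⟨K0, hK0⟩ := (isCompact_Icc (a := -B) (b := B)).exists_bound_of_continuousOn
    (hf.continuous.continuousOn)
  have hK : ∀ s, |u4 s + c ^ 2 * u2 s| ≤ K0 := by
    intro s
    have h := hode s
    have heq : u4 s + c ^ 2 * u2 s = -(f (u s)) := by linarith
    rw [heq, abs_neg]
    have hmem : u s ∈ Set.Icc (-B) B := by
      have := abs_le.mp (hB s); exact Set.mem_Icc.mpr ⟨this.1, this.2⟩
    simpa [Real.norm_eq_abs] using hK0 (u s) hmem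
  have hK0pos : 0 ≤ K0 := le_trans (abs_nonneg _) (hK 0)
  have hwub := aux_wbound u u1 u2 u3 u4 h1 h2 h3 h4 hcu2 hcu4 c B K0 hB hK
  have hwlb := aux_wbound (fun t => -u t) (fun t => -u1 t) (fun t => -u2 t)
    (fun t => -u3 t) (fun t => -u4 t)
    (fun t => (h1 t).neg) (fun t => (h2 t).neg) (fun t => (h3 t).neg) (fun t => (h4 t).neg)
    hcu2.neg hcu4.neg c B K0
    (fun s => by rw [abs_neg]; exact hB s)
    (fun s => by
      have : -u4 s + c ^ 2 * -u2 s = -(u4 s + c ^ 2 * u2 s) := by ring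
      rw [this, abs_neg]; exact hK s)
  obtain ⟨C1, hC1⟩ : ∃ x : ℝ, x = 4 * B + c ^ 2 * B + K0 / 12 := ⟨_, rfl⟩
  have hwlb' : ∀ s, -u2 s + c ^ 2 * -u s ≤ 4 * B + c ^ 2 * B + K0 / 12 := hwlb
  have hw : ∀ s, |u2 s + c ^ 2 * u s| ≤ C1 := by
    intro s
    rw [abs_le]
    constructor
    · linarith [hwlb' s]
    · linarith [hwub s]
  obtain ⟨C2, hC2def⟩ : ∃ x : ℝ, x = C1 + c ^ 2 * B := ⟨_, rfl⟩
  have hu2b : ∀ s, |u2 s| ≤ C2 := by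
    intro s
    have hws := abs_le.mp (hw s)
    have hbs := abs_le.mp (hB s)
    have m1 : c ^ 2 * u s ≤ c ^ 2 * B := mul_le_mul_of_nonneg_left hbs.2 (sq_nonneg c)
    have m2 : c ^ 2 * (-B) ≤ c ^ 2 * u s := mul_le_mul_of_nonneg_left hbs.1 (sq_nonneg c)
    rw [abs_le]
    constructor
    · nlinarith [hws.1, m1]
    · nlinarith [hws.2, m2]
  obtain ⟨C3, hC3def⟩ : ∃ x : ℝ, x = 2 * B + C2 / 2 := ⟨_, rfl⟩
  have hu1b : ∀ s, |u1 s| ≤ C3 := by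
    have := aux_landau u u1 u2 h1 h2 hcu2 B C2 hB hu2b
    intro s; rw [hC3def]; exact this s
  have hw1b := aux_landau (fun t => u2 t + c ^ 2 * u t) (fun t => u3 t + c ^ 2 * u1 t)
    (fun t => u4 t + c ^ 2 * u2 t)
    (fun t => (h3 t).add ((h1 t).const_mul _))
    (fun t => (h4 t).add ((h2 t).const_mul _))
    (by fun_prop) C1 K0 hw hK
  have hw1b' : ∀ s, |u3 s + c ^ 2 * u1 s| ≤ 2 * C1 + K0 / 2 := hw1b
  obtain ⟨C4, hC4def⟩ : ∃ x : ℝ, x = 2 * C1 + K0 / 2 + c ^ 2 * C3 := ⟨_, rfl⟩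
  have hu3b : ∀ s, |u3 s| ≤ C4 := by
    intro s
    have hws := abs_le.mp (hw1b' s)
    have hbs := abs_le.mp (hu1b s)
    have m1 : c ^ 2 * u1 s ≤ c ^ 2 * C3 := mul_le_mul_of_nonneg_left hbs.2 (sq_nonneg c)
    have m2 : c ^ 2 * (-C3) ≤ c ^ 2 * u1 s := mul_le_mul_of_nonneg_left hbs.1 (sq_nonneg c)
    rw [abs_le]
    constructor
    · nlinarith [hws.1, m1]
    · nlinarith [hws.2, m2]
  have hC2 : 0 ≤ C2 := le_trans (abs_nonneg _) (hu2b 0)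
  have hC4 : 0 ≤ C4 := le_trans (abs_nonneg _) (hu3b 0)
  set g : ℝ → ℝ := fun s => u s * f (u s) - c ^ 4 / 4 * (u s) ^ 2 with hg_def
  have hgc : Continuous g := by
    apply Continuous.sub
    · exact hcu.mul (hf.continuous.comp hcu)
    · exact continuous_const.mul (hcu.pow 2)
  have hgpos : ∀ s, u s ≠ 0 → 0 < g s := by
    intro s hs
    have hb : |u s| ≤ M := (hB s).trans hBM.le
    have ht := hthr c hc hcc₀ (u s) hs hb
    have hv2 : 0 < (u s) ^ 2 := by positivity
    have hlt := mul_lt_mul_of_pos_right ht hv2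
    have heq : f (u s) / u s * (u s) ^ 2 = u s * f (u s) := by
      field_simp
    simp only [hg_def]
    linarith [hlt, heq.ge, heq.le]
  have hg0 : ∀ s, 0 ≤ g s := by
    intro s
    by_cases hs : u s = 0
    · simp [hg_def, hs]
    · exact (hgpos s hs).le
  obtain ⟨s₀, hs₀⟩ := Function.ne_iff.mp hne
  have hs₀' : u s₀ ≠ 0 := hs₀
  obtain ⟨η, hη, hηint⟩ := aux_pos g hgc hg0 s₀ (hgpos s₀ hs₀')
  obtain ⟨D, hDdef⟩ : ∃ x : ℝ, x = C2 + C4 + 1 := ⟨_, rfl⟩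
  have hD : 0 < D := by rw [hDdef]; positivity
  obtain ⟨ε, hεdef⟩ : ∃ x : ℝ, x = η / (8 * D) := ⟨_, rfl⟩
  have hε : 0 < ε := by rw [hεdef]; positivity
  obtain ⟨R, hR1, hR2, hR3⟩ := aux_small_top u u1 h1 htop ε hε (s₀ + 1)
  obtain ⟨L, hL1, hL2, hL3⟩ := aux_small_bot u u1 h1 hbot ε hε (s₀ - 1)
  have hLR : L ≤ R := by linarith
  have hmain := aux_key f hf.continuous u u1 u2 u3 u4 h1 h2 h3 h4 hcu2 hcu3 hcu4 c L R hLR hode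
  have hlow : η ≤ ∫ s in L..R, g s := hηint L R hL1 hR1
  have hglam : ∫ s in L..R, g s = ∫ s in L..R, (u s * f (u s) - c ^ 4 / 4 * (u s) ^ 2) := rfl
  have hBT : u L * u3 L - u R * u3 R + u1 R * u2 R - u1 L * u2 L ≤ η / 2 := by
    have b1 : |u L * u3 L| ≤ ε * C4 := by
      rw [abs_mul]; exact mul_le_mul hL2 (hu3b L) (abs_nonneg _) hε.le
    have b2 : |u R * u3 R| ≤ ε * C4 := by
      rw [abs_mul]; exact mul_le_mul hR2 (hu3b R) (abs_nonneg _) hε.le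
    have b3 : |u1 R * u2 R| ≤ ε * C2 := by
      rw [abs_mul]; exact mul_le_mul hR3 (hu2b R) (abs_nonneg _) hε.le
    have b4 : |u1 L * u2 L| ≤ ε * C2 := by
      rw [abs_mul]; exact mul_le_mul hL3 (hu2b L) (abs_nonneg _) hε.le
    have e1 := abs_le.mp b1
    have e2 := abs_le.mp b2
    have e3 := abs_le.mp b3
    have e4 := abs_le.mp b4
    have hεD : ε * D = η / 8 := by
      rw [hεdef]; field_simp
    have m4 : ε * C4 ≤ ε * D := mul_le_mul_of_nonneg_left (by linarith) hε.le
    have m2 : ε * C2 ≤ ε * D := mul_le_mul_of_nonneg_left (by linarith) hε.le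
    linarith [e1.1, e1.2, e2.1, e2.2, e3.1, e3.2, e4.1, e4.2]
  rw [hglam] at hlow
  linarith
end
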